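/- arXiv:2204.07006 — 9 statements merged into one kernel-verified Lean document; each statement's English description precedes it below -/
import Mathlib

section
/- If M is an A-module and x = (x_1,...,x_n) is an M-regular sequence of elements of A, then x is M-independent. -/
open RingTheory.Sequence Submodule

section Aux

variable {A : Type} [CommRing A] {M : Type} [AddCommGroup M] [Module A M]

lemma aux_mem_span_range_smul_top_iff {n : ℕ} (y : Fin n → A) (v : M) :
    v ∈ Ideal.span (Set.range y) • (⊤ : Submodule A M) ↔
      ∃ u : Fin n → M, ∑ i, y i • u i = v := by
  constructor
  · intro hv
    refine Submodule.smul_induction_on hv ?_ ?_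
    · intro a ha w _
      obtain ⟨c, hc⟩ := (mem_span_range_iff_exists_fun A).mp ha
      refine ⟨fun i => c i • w, ?_⟩
      rw [← hc, Finset.sum_smul]
      exact Finset.sum_congr rfl fun i _ => by rw [smul_smul, smul_eq_mul, mul_comm]
    · rintro v₁ v₂ ⟨u₁, hu₁⟩ ⟨u₂, hu₂⟩
      exact ⟨fun i => u₁ i + u₂ i, by simp [smul_add, Finset.sum_add_distrib, hu₁, hu₂]⟩
  · rintro ⟨u, rfl⟩
    exact Submodule.sum_mem _ fun i _ => Submodule.smul_mem_smul
      (Ideal.subset_span ⟨i, rfl⟩) trivial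

lemma aux_weaklyRegular_take {rs : List A} (h : IsWeaklyRegular M rs) (k : ℕ) :
    IsWeaklyRegular M (rs.take k) := by
  constructor
  intro i hi
  have hi2 : i < k ∧ i < rs.length := by simpa using hi
  have := h.regular_mod_prev i hi2.2
  have h1 : (rs.take k).take i = rs.take i := by
    rw [List.take_take]
    exact congrArg (fun j => List.take j rs) (min_eq_left hi2.1.le)
  have h2 : (rs.take k)[i] = rs[i] := List.getElem_take ..
  rw [h1, h2]
  exact this

lemma aux_ofList_ofFn {n : ℕ} (y : Fin n → A) :
    Ideal.ofList (List.ofFn y) = Ideal.span (Set.range y) := by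
  apply congrArg Ideal.span
  ext a
  simp [List.mem_ofFn]

lemma weakly_regular_seq_is_independent
    {n : ℕ} (x : Fin n → A)
    (hreg : IsWeaklyRegular M (List.ofFn x)) :
    ∀ m : Fin n → M, (∑ i, x i • m i) = 0 →
      ∀ i, m i ∈ Ideal.span (Set.range x) • (⊤ : Submodule A M) := by
  induction n with
  | zero => exact fun m _ i => i.elim0
  | succ n IH =>
    intro m hm
    set y : Fin n → A := fun i => x i.castSucc with hy
    have htake : (List.ofFn x).take n = List.ofFn y := by
      rw [List.ofFn_succ' x]
      simp [List.concat_eq_append, List.take_append_of_le_length, hy]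
    -- x (last n) is regular mod (y₁,…,yₙ)M
    have hlast : IsSMulRegular (M ⧸ (Ideal.span (Set.range y) • ⊤ : Submodule A M))
        (x (Fin.last n)) := by
      have := hreg.regular_mod_prev n (by simp)
      rw [htake, aux_ofList_ofFn] at this
      simp only [List.getElem_ofFn] at this
      exact this
    set J : Submodule A M := Ideal.span (Set.range y) • ⊤ with hJ
    have hJle : J ≤ Ideal.span (Set.range x) • (⊤ : Submodule A M) :=
      Submodule.smul_mono_left (Ideal.span_mono (Set.range_comp_subset_range _ _))
    have hsum : ∑ i : Fin n, y i • m i.castSucc + x (Fin.last n) • m (Fin.last n) = 0 := by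
      have h := hm
      rw [Fin.sum_univ_castSucc (f := fun i => x i • m i)] at h
      exact h
    have hmem_last : m (Fin.last n) ∈ J := by
      have h0 : x (Fin.last n) • Submodule.Quotient.mk (p := J) (m (Fin.last n)) = 0 := by
        rw [← Submodule.Quotient.mk_smul]
        rw [Submodule.Quotient.mk_eq_zero]
        have heq : x (Fin.last n) • m (Fin.last n) = -∑ i : Fin n, y i • m i.castSucc := by
          rw [eq_neg_iff_add_eq_zero, add_comm]; exact hsum
        rw [heq]
        exact Submodule.neg_mem _ (Submodule.sum_mem _ fun i _ =>
          Submodule.smul_mem_smul (Ideal.subset_span ⟨i, rfl⟩) trivial)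
      have h0' : x (Fin.last n) • Submodule.Quotient.mk (p := J) (m (Fin.last n))
          = x (Fin.last n) • (0 : M ⧸ J) := by rw [smul_zero]; exact h0
      have := hlast h0'
      rwa [Submodule.Quotient.mk_eq_zero] at this
    obtain ⟨u, hu⟩ := (aux_mem_span_range_smul_top_iff y (m (Fin.last n))).mp hmem_last
    have hpre : IsWeaklyRegular M (List.ofFn y) := by
      rw [← htake]; exact aux_weaklyRegular_take hreg n
    have hrel : ∑ i, y i • (m i.castSucc + x (Fin.last n) • u i) = 0 := by
      have : ∑ i, y i • (m i.castSucc + x (Fin.last n) • u i)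
          = ∑ i : Fin n, y i • m i.castSucc + x (Fin.last n) • ∑ i, y i • u i := by
        rw [Finset.smul_sum, ← Finset.sum_add_distrib]
        refine Finset.sum_congr rfl fun i _ => ?_
        rw [smul_add, smul_comm]
      rw [this, hu, hsum]
    have hIH := IH y hpre _ hrel
    intro i
    refine Fin.lastCases ?_ ?_ i
    · exact hJle hmem_last
    · intro j
      have h1 : m j.castSucc = (m j.castSucc + x (Fin.last n) • u j)
          - x (Fin.last n) • u j := by abel
      rw [h1]
      refine Submodule.sub_mem _ (hJle (hIH j)) ?_
      exact Submodule.smul_mem_smul (Ideal.subset_span ⟨Fin.last n, rfl⟩) trivial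

end Aux

/-- If `x` is an `M`-regular sequence, then `x` is `M`-independent: any relation
`∑ xᵢ • mᵢ = 0` forces every `mᵢ` to lie in `(x₁,…,xₙ)M`. -/
theorem regular_seq_is_independent
    {A : Type} [CommRing A] {M : Type} [AddCommGroup M] [Module A M]
    {n : ℕ} (x : Fin n → A)
    (hreg : RingTheory.Sequence.IsRegular M (List.ofFn x)) :
    ∀ m : Fin n → M, (∑ i, x i • m i) = 0 →
      ∀ i, m i ∈ Ideal.span (Set.range x) • (⊤ : Submodule A M) := by
  exact weakly_regular_seq_is_independent x hreg.toIsWeaklyRegular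
end

section
/- Let A be a Noetherian local ring with maximal ideal m and M an A-module. If M/m²M is free over A/m², then any minimal generating sequence of m is M-independent. -/
open IsLocalRing

theorem key_mem {A : Type} [CommRing A] [IsLocalRing A] [IsNoetherianRing A]
    {n : ℕ} (x : Fin n → A) (hspan : Ideal.span (Set.range x) = maximalIdeal A)
    (hmin : ∀ (k : ℕ) (y : Fin k → A),
      Ideal.span (Set.range y) = maximalIdeal A → n ≤ k)
    (c : Fin n → A) (hc : ∑ j, x j * c j ∈ maximalIdeal A ^ 2) :
    ∀ j, c j ∈ maximalIdeal A := by
  intro j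
  by_contra hj
  have hu : IsUnit (c j) := by
    by_contra h
    exact hj (IsLocalRing.mem_maximalIdeal (c j) |>.mpr h)
  obtain ⟨u, hu⟩ := hu
  rcases n with _ | n
  · exact j.elim0
  set N : Ideal A := Ideal.span (Set.range (x ∘ j.succAbove)) with hN
  have hNle : N ≤ maximalIdeal A := by
    rw [← hspan]
    exact Ideal.span_mono (Set.range_comp_subset_range _ _)
  have hxk : ∀ k, k ≠ j → x k ∈ N := by
    intro k hk
    obtain ⟨l, hl⟩ := Fin.exists_succAbove_eq hk
    exact Ideal.subset_span ⟨l, by simp [hl]⟩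
  have hsum : x j * c j ∈ N ⊔ maximalIdeal A • maximalIdeal A := by
    have hT : ∑ k ∈ Finset.univ.erase j, x k * c k ∈ N := by
      refine Ideal.sum_mem _ fun k hk => ?_
      exact Ideal.mul_mem_right _ _ (hxk k (Finset.mem_erase.mp hk).1)
    have heq : x j * c j = (∑ k, x k * c k) - ∑ k ∈ Finset.univ.erase j, x k * c k := by
      rw [← Finset.add_sum_erase _ _ (Finset.mem_univ j)]; ring
    rw [heq]
    refine Submodule.sub_mem _ ?_ (Submodule.mem_sup_left hT)
    apply Submodule.mem_sup_right
    rwa [smul_eq_mul, ← pow_two]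
  have hle : maximalIdeal A ≤ N ⊔ maximalIdeal A • maximalIdeal A := by
    conv_lhs => rw [← hspan]
    rw [Ideal.span_le]
    rintro _ ⟨k, rfl⟩
    by_cases hk : k = j
    · subst hk
      have : x k = ↑u⁻¹ * (x k * c k) := by
        rw [← hu, mul_comm (x k) _, ← mul_assoc]
        simp
      rw [this]
      exact Ideal.mul_mem_left _ _ hsum
    · exact Submodule.mem_sup_left (hxk k hk)
  have hNak : maximalIdeal A ≤ N :=
    Submodule.le_of_le_smul_of_le_jacobson_bot (IsNoetherian.noetherian _)
      (IsLocalRing.jacobson_eq_maximalIdeal ⊥ bot_ne_top).ge hle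
  have hNeq : Ideal.span (Set.range (x ∘ j.succAbove)) = maximalIdeal A :=
    le_antisymm hNle hNak
  have := hmin n (x ∘ j.succAbove) hNeq
  omega

/-- If `M/𝔪²M` is free over `A/𝔪²`, then any minimal generating sequence of the maximal
ideal `𝔪` is `M`-independent. -/
theorem minimal_generators_independent_of_free_mod_sq
    {A : Type} [CommRing A] [IsLocalRing A] [IsNoetherianRing A]
    {M : Type} [AddCommGroup M] [Module A M]
    [Module.Free (A ⧸ (maximalIdeal A ^ 2))
      (M ⧸ ((maximalIdeal A ^ 2) • ⊤ : Submodule A M))]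
    {n : ℕ} (x : Fin n → A)
    (hspan : Ideal.span (Set.range x) = maximalIdeal A)
    (hmin : ∀ (k : ℕ) (y : Fin k → A),
      Ideal.span (Set.range y) = maximalIdeal A → n ≤ k) :
    ∀ m : Fin n → M, (∑ i, x i • m i) = 0 →
      ∀ i, m i ∈ Ideal.span (Set.range x) • (⊤ : Submodule A M) := by
  classical
  intro m hm i
  rw [hspan]
  set I : Ideal A := maximalIdeal A ^ 2 with hI
  set N : Submodule A M := I • ⊤ with hNdef
  let π : M →ₗ[A] M ⧸ N := N.mkQ
  let e := Module.Free.chooseBasis (A ⧸ I) (M ⧸ N)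
  have h0 : ∑ j, (Ideal.Quotient.mk I (x j)) • π (m j) = 0 := by
    have h1 : π (∑ j, x j • m j) = 0 := by rw [hm, map_zero]
    rw [map_sum] at h1
    rw [← h1]
    exact Finset.sum_congr rfl fun j _ => Module.Quotient.mk_smul_mk M I (x j) (m j)
  have hrel : ∀ b, ∑ j, (Ideal.Quotient.mk I (x j)) * (e.repr (π (m j)) b) = 0 := by
    intro b
    have h2 := congrArg (fun v => e.repr v b) h0
    simpa only [map_sum, map_smul, Finsupp.coe_finset_sum, Finset.sum_apply,
      Finsupp.smul_apply, smul_eq_mul, map_zero, Finsupp.coe_zero, Pi.zero_apply] using h2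
  have hcoef : ∀ j b, ∃ c : A, c ∈ maximalIdeal A ∧
      Ideal.Quotient.mk I c = e.repr (π (m j)) b := by
    intro j b
    choose c hc using fun k => Ideal.Quotient.mk_surjective (I := I) (e.repr (π (m k)) b)
    have hsum : ∑ k, x k * c k ∈ I := by
      rw [← Ideal.Quotient.eq_zero_iff_mem, map_sum]
      simp only [map_mul, hc]
      exact hrel b
    exact ⟨c j, key_mem x hspan hmin c hsum j, hc j⟩
  suffices h : π (m i) ∈ Submodule.map π (maximalIdeal A • ⊤ : Submodule A M) by
    obtain ⟨z, hz, hz2⟩ := h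
    have hsub : z - m i ∈ N := (Submodule.Quotient.eq N).mp hz2
    have hNle : N ≤ maximalIdeal A • (⊤ : Submodule A M) := by
      rw [hNdef, hI, pow_two]
      exact Submodule.smul_mono_left Ideal.mul_le_left
    have : m i = z - (z - m i) := (sub_sub_cancel z (m i)).symm
    rw [this]
    exact Submodule.sub_mem _ hz (hNle hsub)
  have hrepr : π (m i) = Finsupp.sum (e.repr (π (m i))) fun b c => c • e b := by
    conv_lhs => rw [← e.linearCombination_repr (π (m i))]
    rw [Finsupp.linearCombination_apply]
  rw [hrepr, Finsupp.sum]
  refine Submodule.sum_mem _ fun b _ => ?_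
  obtain ⟨c, hcm, hcq⟩ := hcoef i b
  obtain ⟨v, hv⟩ := Submodule.Quotient.mk_surjective N (e b)
  have : (e.repr (π (m i)) b) • e b = π (c • v) := by
    rw [← hcq, ← hv]
    exact Module.Quotient.mk_smul_mk M I c v
  rw [this]
  exact Submodule.mem_map_of_mem (Submodule.smul_mem_smul hcm trivial)
end

section
/- Let A be a Noetherian local ring with maximal ideal m, M a free A-module, and I any ideal of A. If y_1,...,y_ℓ is a minimal system of generators of I and m_1,...,m_ℓ ∈ M satisfy y_1 m_1 + ... + y_ℓ m_ℓ = 0, then each m_j ∈ mM. -/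
open IsLocalRing

/-- Auxiliary: a relation among a minimal system of generators has all coefficients
in the maximal ideal. -/
lemma coeffs_mem_maximalIdeal
    {A : Type} [CommRing A] [IsLocalRing A]
    (I : Ideal A) {ℓ : ℕ} (y : Fin ℓ → A)
    (hspan : Ideal.span (Set.range y) = I)
    (hmin : ∀ (k : ℕ) (z : Fin k → A), Ideal.span (Set.range z) = I → ℓ ≤ k)
    (a : Fin ℓ → A) (h : (∑ j : Fin ℓ, y j * a j) = 0) :
    ∀ j, a j ∈ maximalIdeal A := by
  intro j
  by_contra hj
  have hu : IsUnit (a j) := by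
    rwa [mem_maximalIdeal, mem_nonunits_iff, not_not] at hj
  obtain ⟨n, rfl⟩ : ∃ n, ℓ = n + 1 := ⟨ℓ - 1, by have := j.pos; omega⟩
  set z : Fin n → A := y ∘ j.succAbove with hzdef
  have hzmem : ∀ i : Fin n, y (j.succAbove i) ∈ Ideal.span (Set.range z) :=
    fun i => Ideal.subset_span ⟨i, rfl⟩
  have hyj : y j ∈ Ideal.span (Set.range z) := by
    obtain ⟨u, hu'⟩ := hu
    have hsum : y j * a j = -∑ i : Fin n, y (j.succAbove i) * a (j.succAbove i) := by
      have := Fin.sum_univ_succAbove (fun i => y i * a i) j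
      rw [this] at h
      linear_combination h
    have hy : y j = (↑u⁻¹ : A) * (y j * a j) := by
      rw [← hu', mul_comm (y j), ← mul_assoc, ← Units.val_mul, inv_mul_cancel]
      simp
    rw [hy, hsum]
    refine Ideal.mul_mem_left _ _ (neg_mem (Submodule.sum_mem _ fun i _ => ?_))
    exact Ideal.mul_mem_right _ _ (hzmem i)
  have hz : Ideal.span (Set.range z) = I := by
    apply le_antisymm
    · rw [← hspan]
      apply Ideal.span_mono
      rintro _ ⟨i, rfl⟩
      exact ⟨j.succAbove i, rfl⟩
    · rw [← hspan, Ideal.span_le]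
      rintro _ ⟨i, rfl⟩
      rcases eq_or_ne i j with rfl | hij
      · exact hyj
      · obtain ⟨k, hk⟩ := Fin.exists_succAbove_eq hij
        rw [← hk]
        exact hzmem k
  exact absurd (hmin n z hz) (by omega)

/-- If `M` is a free module over a Noetherian local ring `A` and `y₁,…,y_ℓ` is a minimal
system of generators of an ideal `I`, then any relation `∑ yⱼ • mⱼ = 0` forces all
`mⱼ ∈ 𝔪M`. -/
theorem free_module_relations_in_max_ideal
    {A : Type} [CommRing A] [IsLocalRing A] [IsNoetherianRing A]
    {M : Type} [AddCommGroup M] [Module A M] [Module.Free A M]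
    (I : Ideal A) {ℓ : ℕ} (y : Fin ℓ → A)
    (hspan : Ideal.span (Set.range y) = I)
    (hmin : ∀ (k : ℕ) (z : Fin k → A), Ideal.span (Set.range z) = I → ℓ ≤ k)
    (m : Fin ℓ → M) (hrel : (∑ j, y j • m j) = 0) :
    ∀ j, m j ∈ (maximalIdeal A) • (⊤ : Submodule A M) := by
  obtain ⟨⟨ι, b⟩⟩ := Module.Free.exists_basis (R := A) (M := M)
  have hcoeff : ∀ i : ι, ∀ j, b.repr (m j) i ∈ maximalIdeal A := by
    intro i
    apply coeffs_mem_maximalIdeal I y hspan hmin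
    have : b.repr (∑ j, y j • m j) i = 0 := by rw [hrel]; simp
    rw [map_sum] at this
    simpa [Finsupp.finset_sum_apply, mul_comm] using this
  intro j
  rw [← b.linearCombination_repr (m j), Finsupp.linearCombination_apply, Finsupp.sum]
  exact Submodule.sum_mem _ fun i _ =>
    Submodule.smul_mem_smul (hcoeff i j) Submodule.mem_top
end

section
/- Let A be a Noetherian local ring, I ⊂ m_A an ideal generated by an M-independent sequence x_1,...,x_n, and M an A-module such that M/IM is free over A/I. Then M/I²M is free over A/I². -/
open IsLocalRing

private lemma smul_decomp {A : Type} [CommRing A] {M : Type} [AddCommGroup M] [Module A M]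
    {n : ℕ} (x : Fin n → A) (N : Submodule A M) {z : M}
    (hz : z ∈ Ideal.span (Set.range x) • N) :
    ∃ w : Fin n → M, (∀ i, w i ∈ N) ∧ z = ∑ i, x i • w i := by
  refine Submodule.smul_induction_on hz ?_ ?_
  · intro r hr m hm
    rw [Ideal.span, Submodule.mem_span_range_iff_exists_fun] at hr
    obtain ⟨c, hc⟩ := hr
    refine ⟨fun i => c i • m, fun i => N.smul_mem _ hm, ?_⟩
    rw [← hc, Finset.sum_smul]
    simp [smul_smul, mul_comm]
  · rintro y z ⟨w1, h1, rfl⟩ ⟨w2, h2, rfl⟩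
    exact ⟨fun i => w1 i + w2 i, fun i => N.add_mem (h1 i) (h2 i), by
      simp [smul_add, Finset.sum_add_distrib]⟩

/-- If `I ⊆ 𝔪` is generated by an `M`-independent sequence and `M/IM` is free over `A/I`,
then `M/I²M` is free over `A/I²`. -/
theorem free_mod_sq_of_independent
    {A : Type} [CommRing A] [IsLocalRing A] [IsNoetherianRing A]
    {M : Type} [AddCommGroup M] [Module A M]
    {n : ℕ} (x : Fin n → A) (I : Ideal A)
    (hI : I = Ideal.span (Set.range x)) (hIm : I ≤ maximalIdeal A)
    (hind : ∀ m : Fin n → M, (∑ i, x i • m i) = 0 →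
      ∀ i, m i ∈ I • (⊤ : Submodule A M))
    (hfree : Module.Free (A ⧸ I) (M ⧸ (I • ⊤ : Submodule A M))) :
    Module.Free (A ⧸ (I ^ 2)) (M ⧸ ((I ^ 2) • ⊤ : Submodule A M)) := by
  classical
  haveI := hfree
  have hIN : ((I ^ 2) • ⊤ : Submodule A M) = I • (I • ⊤ : Submodule A M) := by
    rw [pow_two, ← smul_eq_mul, Submodule.smul_assoc]
  have hN2N : ((I ^ 2) • ⊤ : Submodule A M) ≤ I • ⊤ := hIN ▸ Submodule.smul_le_right
  -- choose a basis of M/IM and lift it to M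
  set ι := Module.Free.ChooseBasisIndex (A ⧸ I) (M ⧸ (I • ⊤ : Submodule A M)) with hι
  set b := Module.Free.chooseBasis (A ⧸ I) (M ⧸ (I • ⊤ : Submodule A M)) with hb
  choose m hm using fun α : ι =>
    Submodule.Quotient.mk_surjective (I • ⊤ : Submodule A M) (b α)
  -- sections of the quotient maps
  have lift : ∀ (J : Ideal A), ∃ s : A ⧸ J → A, ∀ q, Ideal.Quotient.mk J (s q) = q :=
    fun J => ⟨fun q => (Ideal.Quotient.mk_surjective q).choose,
      fun q => (Ideal.Quotient.mk_surjective q).choose_spec⟩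
  -- membership test via the basis
  have hbI : ∀ (t : Finset ι) (g : ι → A),
      (∑ α ∈ t, g α • m α) ∈ (I • ⊤ : Submodule A M) → ∀ α ∈ t, g α ∈ I := by
    intro t g hg
    have hmk : Submodule.Quotient.mk (p := (I • ⊤ : Submodule A M)) (∑ α ∈ t, g α • m α)
        = ∑ α ∈ t, (Ideal.Quotient.mk I (g α)) • b α := by
      rw [← Submodule.mkQ_apply, map_sum]
      refine Finset.sum_congr rfl fun α _ => ?_
      rw [Submodule.mkQ_apply, ← hm α, ← Module.Quotient.mk_smul_mk]
    have h0 : ∑ α ∈ t, (Ideal.Quotient.mk I (g α)) • b α = 0 := by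
      rw [← hmk, Submodule.Quotient.mk_eq_zero]; exact hg
    intro α hα
    exact Ideal.Quotient.eq_zero_iff_mem.mp
      (linearIndependent_iff'.mp b.linearIndependent t _ h0 α hα)
  -- linear independence
  have hli : LinearIndependent (A ⧸ I ^ 2)
      (fun α : ι => Submodule.Quotient.mk (p := ((I ^ 2) • ⊤ : Submodule A M)) (m α)) := by
    rw [linearIndependent_iff']
    intro t l hl α hα
    obtain ⟨s2, hs2⟩ := lift (I ^ 2)
    set a : ι → A := fun β => s2 (l β) with hadef
    have ha : ∀ β, Ideal.Quotient.mk (I ^ 2) (a β) = l β := fun β => hs2 _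
    have hz : (∑ β ∈ t, a β • m β) ∈ ((I ^ 2) • ⊤ : Submodule A M) := by
      rw [← Submodule.Quotient.mk_eq_zero ((I ^ 2) • ⊤ : Submodule A M)]
      rw [← Submodule.mkQ_apply, map_sum, ← hl]
      refine Finset.sum_congr rfl fun β _ => ?_
      rw [Submodule.mkQ_apply, ← ha β, Module.Quotient.mk_smul_mk]
    have haI : ∀ β ∈ t, a β ∈ I := hbI t a (hN2N hz)
    have h' : ∀ β, (if β ∈ t then a β else 0) ∈ Submodule.span A (Set.range x) := by
      intro β
      split
      · rw [← Ideal.span, ← hI]; exact haI β ‹_›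
      · exact Submodule.zero_mem _
    choose c hc using fun β => (Submodule.mem_span_range_iff_exists_fun A).mp (h' β)
    have hrw : (∑ β ∈ t, a β • m β) = ∑ i, x i • (∑ β ∈ t, c β i • m β) := by
      simp_rw [Finset.smul_sum]
      rw [Finset.sum_comm]
      refine Finset.sum_congr rfl fun β hβ => ?_
      have hab : a β = ∑ i, c β i • x i := by rw [hc β, if_pos hβ]
      rw [hab, Finset.sum_smul]
      simp [smul_smul, mul_comm]
    have hz' : (∑ β ∈ t, a β • m β) ∈ Ideal.span (Set.range x) • (I • ⊤ : Submodule A M) := by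
      rw [← hI, ← hIN]; exact hz
    obtain ⟨w, hwN, hweq⟩ := smul_decomp x _ hz'
    have hzero : ∑ i, x i • ((∑ β ∈ t, c β i • m β) - w i) = 0 := by
      simp only [smul_sub, Finset.sum_sub_distrib]
      rw [← hrw, ← hweq, sub_self]
    have hmem := hind _ hzero
    have hSN : ∀ i, (∑ β ∈ t, c β i • m β) ∈ (I • ⊤ : Submodule A M) := by
      intro i
      have h2 := Submodule.add_mem _ (hmem i) (hwN i)
      simpa using h2
    have hcI : ∀ i, c α i ∈ I := fun i => hbI t (fun β => c β i) (hSN i) α hα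
    have haI2 : a α ∈ I ^ 2 := by
      have hab : a α = ∑ i, c α i • x i := by rw [hc α, if_pos hα]
      rw [hab, pow_two]
      exact Ideal.sum_mem _ fun i _ =>
        Ideal.mul_mem_mul (hcI i) (hI ▸ Ideal.subset_span ⟨i, rfl⟩)
    rw [← ha α, Ideal.Quotient.eq_zero_iff_mem]
    exact haI2
  -- spanning
  have hspan : ⊤ ≤ Submodule.span (A ⧸ I ^ 2)
      (Set.range fun α : ι =>
        Submodule.Quotient.mk (p := ((I ^ 2) • ⊤ : Submodule A M)) (m α)) := by
    have hPk : ∀ z : M, ∃ p ∈ Submodule.span A (Set.range m),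
        z - p ∈ (I • ⊤ : Submodule A M) := by
      intro z
      have hz : Submodule.Quotient.mk (p := (I • ⊤ : Submodule A M)) z ∈
          Submodule.span (A ⧸ I) (Set.range b) := by rw [b.span_eq]; trivial
      obtain ⟨cf, hcf⟩ := Finsupp.mem_span_range_iff_exists_finsupp.mp hz
      obtain ⟨s1, hs1⟩ := lift I
      refine ⟨∑ β ∈ cf.support, s1 (cf β) • m β,
        Submodule.sum_mem _ fun β _ =>
          Submodule.smul_mem _ _ (Submodule.subset_span ⟨β, rfl⟩), ?_⟩
      rw [← Submodule.Quotient.mk_eq_zero (I • ⊤ : Submodule A M),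
        Submodule.Quotient.mk_sub]
      have hmkp : Submodule.Quotient.mk (p := (I • ⊤ : Submodule A M))
          (∑ β ∈ cf.support, s1 (cf β) • m β) = ∑ β ∈ cf.support, cf β • b β := by
        rw [← Submodule.mkQ_apply, map_sum]
        refine Finset.sum_congr rfl fun β _ => ?_
        rw [Submodule.mkQ_apply, ← hm β, ← Module.Quotient.mk_smul_mk, hs1]
      rw [hmkp, ← hcf, sub_eq_zero]
      simp [Finsupp.sum]
    have h1 : (⊤ : Submodule A M) ≤
        Submodule.span A (Set.range m) ⊔ (I • ⊤ : Submodule A M) := by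
      intro z _
      obtain ⟨p, hp, hzp⟩ := hPk z
      have hzz : z = p + (z - p) := by abel
      rw [hzz]
      exact Submodule.add_mem _ (Submodule.mem_sup_left hp) (Submodule.mem_sup_right hzp)
    have h2 : (I • ⊤ : Submodule A M) ≤
        Submodule.span A (Set.range m) ⊔ ((I ^ 2) • ⊤ : Submodule A M) := by
      calc (I • ⊤ : Submodule A M)
          ≤ I • (Submodule.span A (Set.range m) ⊔ (I • ⊤ : Submodule A M)) :=
            smul_mono_right I h1
        _ = I • Submodule.span A (Set.range m) ⊔ I • (I • ⊤ : Submodule A M) :=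
            Submodule.smul_sup _ _ _
        _ ≤ Submodule.span A (Set.range m) ⊔ ((I ^ 2) • ⊤ : Submodule A M) :=
            sup_le_sup Submodule.smul_le_right hIN.ge
    have htop : (⊤ : Submodule A M) ≤
        Submodule.span A (Set.range m) ⊔ ((I ^ 2) • ⊤ : Submodule A M) :=
      le_trans h1 (sup_le le_sup_left h2)
    intro zq _
    obtain ⟨z, rfl⟩ := Submodule.Quotient.mk_surjective _ zq
    obtain ⟨p, hp, q, hq, hpq⟩ := Submodule.mem_sup.mp (htop (Submodule.mem_top (x := z)))
    have hmkq : Submodule.Quotient.mk (p := ((I ^ 2) • ⊤ : Submodule A M)) z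
        = Submodule.Quotient.mk p := by
      rw [← hpq, Submodule.Quotient.mk_add,
        (Submodule.Quotient.mk_eq_zero _).mpr hq, add_zero]
    rw [hmkq]
    refine Submodule.span_induction ?_ ?_ ?_ ?_ hp
    · rintro y ⟨α, rfl⟩
      exact Submodule.subset_span ⟨α, rfl⟩
    · rw [Submodule.Quotient.mk_zero]
      exact Submodule.zero_mem _
    · intro u v _ _ hu hv
      rw [Submodule.Quotient.mk_add]
      exact Submodule.add_mem _ hu hv
    · intro r y _ hy
      rw [← Module.Quotient.mk_smul_mk]
      exact Submodule.smul_mem _ _ hy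
  exact Module.Free.of_basis (Module.Basis.mk hli hspan)
end

section
/- Let A be a Noetherian local ring, M a finite A-module, and I ⊂ m_A an ideal that is strongly M-independent (i.e., for every i ≥ 1 and every minimal generating sequence y_1,...,y_ℓ of I^i, any relation Σ y_j m_j = 0 in M forces all m_j ∈ IM). If M/IM is free over A/I, then M is free over A. -/
open IsLocalRing

/-- If `I ⊆ 𝔪` is strongly `M`-independent (every relation over a minimal generating
sequence of any power `Iⁱ`, `i ≥ 1`, has its coefficients in `IM`) and `M/IM` is free over
`A/I`, then `M` is free over `A`. -/
theorem free_of_strongly_independent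
    {A : Type} [CommRing A] [IsLocalRing A] [IsNoetherianRing A]
    {M : Type} [AddCommGroup M] [Module A M] [Module.Finite A M]
    (I : Ideal A) (hIm : I ≤ maximalIdeal A)
    (hstrong : ∀ i : ℕ, 1 ≤ i → ∀ (ℓ : ℕ) (y : Fin ℓ → A),
      Ideal.span (Set.range y) = I ^ i →
      (∀ (k : ℕ) (z : Fin k → A), Ideal.span (Set.range z) = I ^ i → ℓ ≤ k) →
      ∀ m : Fin ℓ → M, (∑ j, y j • m j) = 0 →
        ∀ j, m j ∈ I • (⊤ : Submodule A M))
    (hfree : Module.Free (A ⧸ I) (M ⧸ (I • ⊤ : Submodule A M))) :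
    Module.Free A M := by
  classical
  set Q := M ⧸ (I • ⊤ : Submodule A M) with hQ
  have hInetop : I ≠ ⊤ := fun h =>
    (IsLocalRing.maximalIdeal.isMaximal A).ne_top (top_le_iff.mp (h ▸ hIm))
  haveI : Nontrivial (A ⧸ I) := Ideal.Quotient.nontrivial_iff.mpr hInetop
  haveI : IsScalarTower A (A ⧸ I) Q :=
    Module.IsTorsionBySet.isScalarTower _
  haveI : Module.Finite (A ⧸ I) Q :=
    Module.Finite.of_restrictScalars_finite A (A ⧸ I) Q
  -- choose a finite basis of Q over A/I
  let ι := Module.Free.ChooseBasisIndex (A ⧸ I) Q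
  let b : Module.Basis ι (A ⧸ I) Q := Module.Free.chooseBasis (A ⧸ I) Q
  -- lift it to M
  have hsurj : Function.Surjective (Submodule.Quotient.mk (p := (I • ⊤ : Submodule A M))) :=
    Submodule.Quotient.mk_surjective _
  choose m hm using fun i => hsurj (b i)
  -- the quotient map sends `a • x` to `(mk a) • (mk x)`
  have hmk : ∀ (a : A) (x : M),
      (Submodule.Quotient.mk (p := (I • ⊤ : Submodule A M)) (a • x)) =
        (Ideal.Quotient.mk I a) •
          (Submodule.Quotient.mk (p := (I • ⊤ : Submodule A M)) x) := fun a x => rfl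
  -- coefficients of a relation modulo `I•M` lie in `I`
  have hcoeff : ∀ (a : ι → A), (∑ j, a j • m j) ∈ (I • ⊤ : Submodule A M) →
      ∀ j, a j ∈ I := by
    intro a hrel j
    have h0 : (∑ j, (Ideal.Quotient.mk I (a j)) • b j) = 0 := by
      have h1 := (Submodule.Quotient.mk_eq_zero (I • ⊤ : Submodule A M)).mpr hrel
      calc (∑ j, (Ideal.Quotient.mk I (a j)) • b j)
          = ∑ j, Submodule.Quotient.mk (p := (I • ⊤ : Submodule A M)) (a j • m j) :=
            Finset.sum_congr rfl fun j _ => by rw [hmk, hm]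
        _ = Submodule.Quotient.mk (p := (I • ⊤ : Submodule A M)) (∑ j, a j • m j) := by
            simp only [← Submodule.mkQ_apply, map_sum]
        _ = 0 := h1
    have h2 := Fintype.linearIndependent_iff.mp b.linearIndependent _ h0 j
    rwa [← Ideal.Quotient.eq_zero_iff_mem]
  -- by induction, coefficients of a true relation lie in all powers of I
  have hpow : ∀ (a : ι → A), (∑ j, a j • m j) = 0 → ∀ i : ℕ, 1 ≤ i → ∀ j, a j ∈ I ^ i := by
    intro a hrel i
    induction i with
    | zero => intro h; exact absurd h (by norm_num)
    | succ i ih =>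
      intro _ j
      rcases Nat.eq_zero_or_pos i with hi0 | hi1
      · subst hi0
        simpa using hcoeff a (hrel ▸ Submodule.zero_mem _) j
      · -- a j ∈ I ^ i for all j; pick a minimal generating family of I ^ i
        have ha : ∀ j, a j ∈ I ^ i := ih hi1
        have hfg : (I ^ i).FG := IsNoetherian.noetherian _
        have hex : ∃ k : ℕ, ∃ z : Fin k → A, Ideal.span (Set.range z) = I ^ i := by
          obtain ⟨n, z, hz⟩ := Submodule.fg_iff_exists_fin_generating_family.mp hfg
          exact ⟨n, z, hz⟩
        obtain ⟨y, hy⟩ := Nat.find_spec hex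
        have hmin : ∀ (k : ℕ) (z : Fin k → A), Ideal.span (Set.range z) = I ^ i →
            Nat.find hex ≤ k := fun k z hz => Nat.find_min' hex ⟨z, hz⟩
        -- write each a j as a combination of the y's
        have hmemy : ∀ j, a j ∈ Submodule.span A (Set.range y) := fun j => by
          rw [← Ideal.span, hy]; exact ha j
        choose c hc using fun j => (Submodule.mem_span_range_iff_exists_fun A).mp (hmemy j)
        -- reorganize the relation
        have hrel' : (∑ k, y k • (∑ j, c j k • m j)) = 0 := by
          have heq : (∑ k, y k • (∑ j, c j k • m j)) = ∑ j, a j • m j := by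
            simp_rw [Finset.smul_sum]
            rw [Finset.sum_comm]
            refine Finset.sum_congr rfl fun j _ => ?_
            rw [← hc j, Finset.sum_smul]
            refine Finset.sum_congr rfl fun k _ => ?_
            rw [smul_eq_mul, mul_comm, ← smul_smul]
          rw [heq, hrel]
        have hIM := hstrong i hi1 (Nat.find hex) y hy hmin _ hrel'
        -- hence each c j k ∈ I
        have hcI : ∀ k j, c j k ∈ I := fun k => hcoeff (fun j => c j k) (hIM k)
        -- conclude a j ∈ I ^ (i+1)
        rw [← hc j, pow_succ']
        refine Ideal.sum_mem _ fun k _ => ?_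
        rw [smul_eq_mul]
        have hyk : y k ∈ I ^ i := by rw [← hy]; exact Ideal.subset_span ⟨k, rfl⟩
        exact Ideal.mul_mem_mul (hcI k j) hyk
  -- linear independence of m
  have hbot : (⨅ i : ℕ, I ^ i) = ⊥ := Ideal.iInf_pow_eq_bot_of_isLocalRing I hInetop
  have hli : LinearIndependent A m := by
    rw [Fintype.linearIndependent_iff]
    intro a hrel j
    have : a j ∈ (⨅ i : ℕ, I ^ i) := by
      rw [Submodule.mem_iInf]
      intro i
      rcases Nat.eq_zero_or_pos i with h0 | h1
      · subst h0; simp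
      · exact hpow a hrel i h1 j
    rw [hbot] at this
    simpa using this
  -- span of m is everything, by Nakayama
  have hspanQ : (⊤ : Submodule A Q) ≤ Submodule.span A
      (Set.range fun i => Submodule.Quotient.mk (p := (I • ⊤ : Submodule A M)) (m i)) := by
    intro q _
    have hq : q ∈ Submodule.span (A ⧸ I) (Set.range b) := by rw [b.span_eq]; trivial
    refine Submodule.span_induction (fun x hx => ?_) (Submodule.zero_mem _)
      (fun x y _ _ hx hy => Submodule.add_mem _ hx hy) (fun r x _ hx => ?_) hq
    · obtain ⟨i, rfl⟩ := hx
      exact Submodule.subset_span ⟨i, hm i⟩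
    · obtain ⟨r', rfl⟩ := Ideal.Quotient.mk_surjective r
      have : (Ideal.Quotient.mk I r') • x = r' • x :=
        (algebraMap_smul (A ⧸ I) r' x)
      rw [this]
      exact Submodule.smul_mem _ _ hx
  have hspan : (⊤ : Submodule A M) ≤ Submodule.span A (Set.range m) := by
    have hNN : (⊤ : Submodule A M) ≤ Submodule.span A (Set.range m) ⊔
        I • (⊤ : Submodule A M) := by
      intro x _
      have hx : Submodule.Quotient.mk (p := (I • ⊤ : Submodule A M)) x ∈
          Submodule.span A
            (Set.range fun i => Submodule.Quotient.mk (p := (I • ⊤ : Submodule A M)) (m i)) :=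
        hspanQ trivial
      have : Submodule.Quotient.mk (p := (I • ⊤ : Submodule A M)) x ∈
          Submodule.map (Submodule.mkQ (I • ⊤ : Submodule A M))
            (Submodule.span A (Set.range m)) := by
        rw [Submodule.map_span]
        convert hx
        · rfl
        rw [← Set.range_comp]
        rfl
      obtain ⟨z, hz, hzx⟩ := this
      have hxz : x - z ∈ (I • ⊤ : Submodule A M) := by
        rw [← Submodule.Quotient.eq]
        exact hzx.symm ▸ rfl
      have : x = z + (x - z) := by abel
      rw [this]
      exact Submodule.add_mem _ (Submodule.mem_sup_left hz) (Submodule.mem_sup_right hxz)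
    exact le_trans hNN (by
      have := Submodule.le_of_le_smul_of_le_jacobson_bot
        (N := Submodule.span A (Set.range m)) (N' := (⊤ : Submodule A M))
        (IsNoetherian.noetherian _)
        (le_trans hIm (IsLocalRing.maximalIdeal_le_jacobson ⊥)) hNN
      rw [sup_le_iff]
      exact ⟨le_refl _, le_trans Submodule.smul_le_right this⟩)
  exact Module.Free.of_basis (Module.Basis.mk hli hspan)
end

section
/- Let A be a ring, M an A-module, and x = (x_1,...,x_n) an M-independent sequence generating the ideal J. Then for every ℓ in {1,...,n}, the kernel of the ℓ-th Koszul differential d_ℓ : K_ℓ(x,M) → K_{ℓ-1}(x,M) is contained in J·K_ℓ(x,M). -/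
/-- The degree `j+1` part of the Koszul complex `K(x, M)`, modelled as functions on the
`(j+1)`-element subsets of `Fin n`, together with its differential to degree `j`:
`(d m)_t = ∑_{i ∉ t} (-1)^{#{a ∈ t | a < i}} xᵢ • m_{t ∪ {i}}`. -/
noncomputable def koszulDiff {A : Type} [CommRing A] {M : Type} [AddCommGroup M]
    [Module A M] {n : ℕ} (x : Fin n → A) (j : ℕ)
    (m : {s : Finset (Fin n) // s.card = j + 1} → M)
    (t : {s : Finset (Fin n) // s.card = j}) : M :=
  ∑ i ∈ t.1ᶜ.attach,
    ((-1 : ℤ) ^ ((t.1.filter (fun a => a < i.1)).card)) •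
      (x i.1 • m ⟨insert i.1 t.1, by
        rcases i with ⟨i, hi⟩
        rw [Finset.mem_compl] at hi
        simp [Finset.card_insert_of_notMem hi, t.2]⟩)

/-- If `x` is `M`-independent, then for `1 ≤ ℓ ≤ n` the kernel of the Koszul differential
`d_ℓ : K_ℓ(x,M) → K_{ℓ-1}(x,M)` is contained in `J·K_ℓ(x,M)`, where `J = (x₁,…,xₙ)`.
Here `ℓ = j + 1`. -/
theorem koszul_kernel_subset_of_independent
    {A : Type} [CommRing A] {M : Type} [AddCommGroup M] [Module A M]
    {n : ℕ} (x : Fin n → A)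
    (hind : ∀ m : Fin n → M, (∑ i, x i • m i) = 0 →
      ∀ i, m i ∈ Ideal.span (Set.range x) • (⊤ : Submodule A M))
    (j : ℕ) (hj : j + 1 ≤ n)
    (m : {s : Finset (Fin n) // s.card = j + 1} → M)
    (hm : koszulDiff x j m = 0) :
    ∀ s, m s ∈ Ideal.span (Set.range x) • (⊤ : Submodule A M) := by
  classical
  intro s
  have hs : s.1.Nonempty := Finset.card_pos.mp (by rw [s.2]; omega)
  obtain ⟨i₀, hi₀⟩ := hs
  have htc : (s.1.erase i₀).card = j := by
    rw [Finset.card_erase_of_mem hi₀, s.2]; omega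
  set t : {u : Finset (Fin n) // u.card = j} := ⟨s.1.erase i₀, htc⟩ with ht
  have h0 : koszulDiff x j m t = 0 := by rw [hm]; rfl
  set u : Fin n → M := fun i => if h : i ∈ t.1ᶜ then
      ((-1 : ℤ) ^ ((t.1.filter (fun a => a < i)).card)) • m ⟨insert i t.1, by
        rw [Finset.mem_compl] at h
        simp [Finset.card_insert_of_notMem h, t.2]⟩ else 0 with hu
  have hsum : ∑ i, x i • u i = 0 := by
    have h1 : ∑ i, x i • u i = ∑ i ∈ t.1ᶜ, x i • u i := by
      symm
      apply Finset.sum_subset (Finset.subset_univ _)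
      intro i _ hi
      rw [hu]
      simp only [dif_neg hi, smul_zero]
    rw [h1, ← Finset.sum_attach t.1ᶜ (fun i => x i • u i), ← h0]
    unfold koszulDiff
    refine Finset.sum_congr rfl (fun i _ => ?_)
    rw [hu]
    simp only [dif_pos i.2]
    rw [smul_comm]
  have hmem := hind u hsum i₀
  have hi₀c : i₀ ∈ t.1ᶜ := by
    rw [ht, Finset.mem_compl]
    exact Finset.notMem_erase _ _
  rw [hu] at hmem
  simp only [dif_pos hi₀c] at hmem
  have heq : (⟨insert i₀ t.1, by
      rw [Finset.mem_compl] at hi₀c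
      simp [Finset.card_insert_of_notMem hi₀c, t.2]⟩ :
      {u : Finset (Fin n) // u.card = j + 1}) = s := by
    apply Subtype.ext
    exact Finset.insert_erase hi₀
  rw [heq] at hmem
  rcases Nat.even_or_odd ((t.1.filter (fun a => a < i₀)).card) with he | ho
  · rwa [he.neg_one_pow, one_smul] at hmem
  · rw [ho.neg_one_pow, neg_smul, one_smul] at hmem
    simpa using neg_mem hmem
end

section
/- Let A be a ring, M a nonzero finitely generated A-module, x = (x_1,...,x_n) an M-independent sequence, u = (u_1,...,u_n) a sequence generating an ideal J_u contained in the Jacobson radical of A with J_x ⊆ J_u, and W a matrix with x = uW. Then det W ∉ J_x. -/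
open Matrix Finset

namespace LechTower

variable {A : Type} [CommRing A] {n : ℕ}

/-- Row `i` is either (the transpose of) column `i` of `W`, or a standard basis vector. -/
def BB (W : Matrix (Fin n) (Fin n) A) (σ : Fin n → Option (Fin n)) : Matrix (Fin n) (Fin n) A :=
  Matrix.of fun i => (σ i).elim (fun j => W j i) (fun v => Pi.single v 1)

def dd (W : Matrix (Fin n) (Fin n) A) (σ : Fin n → Option (Fin n)) : A := (BB W σ).det

def yv (x u : Fin n → A) (σ : Fin n → Option (Fin n)) (i : Fin n) : A := (σ i).elim (x i) u

lemma BB_update (W : Matrix (Fin n) (Fin n) A) (σ : Fin n → Option (Fin n)) (i k : Fin n) :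
    BB W (Function.update σ i (some k)) = (BB W σ).updateRow i (Pi.single k 1) := by
  ext r c
  rcases eq_or_ne r i with rfl | h
  · simp [BB, Matrix.updateRow_self]
  · simp [BB, Matrix.updateRow_ne h, Function.update_of_ne h]

lemma BB_mulVec (W : Matrix (Fin n) (Fin n) A) (x u : Fin n → A)
    (hW : ∀ i, x i = ∑ j, u j * W j i) (σ : Fin n → Option (Fin n)) :
    (BB W σ) *ᵥ u = yv x u σ := by
  funext i
  cases hσ : σ i with
  | none =>
      simp only [Matrix.mulVec, dotProduct, BB, Matrix.of_apply, hσ, Option.elim, yv]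
      rw [hW i]; exact Finset.sum_congr rfl fun j _ => mul_comm _ _
  | some v =>
      simp only [Matrix.mulVec, dotProduct, BB, Matrix.of_apply, hσ, Option.elim, yv,
        Pi.single_apply, ite_mul, one_mul, zero_mul]
      simp

/-- The mixed Cramer identity. -/
lemma key (W : Matrix (Fin n) (Fin n) A) (x u : Fin n → A)
    (hW : ∀ i, x i = ∑ j, u j * W j i) (σ : Fin n → Option (Fin n)) (k : Fin n) :
    ∑ i, dd W (Function.update σ i (some k)) * yv x u σ i = dd W σ * u k := by
  have h1 : ∀ i, dd W (Function.update σ i (some k)) = (BB W σ).adjugate k i := by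
    intro i; rw [Matrix.adjugate_apply, dd, BB_update]
  calc ∑ i, dd W (Function.update σ i (some k)) * yv x u σ i
      = ∑ i, (BB W σ).adjugate k i * yv x u σ i := by
        exact Finset.sum_congr rfl fun i _ => by rw [h1]
    _ = ((BB W σ).adjugate *ᵥ (yv x u σ)) k := rfl
    _ = ((BB W σ).adjugate *ᵥ ((BB W σ) *ᵥ u)) k := by rw [BB_mulVec W x u hW]
    _ = (((BB W σ).adjugate * (BB W σ)) *ᵥ u) k := by rw [Matrix.mulVec_mulVec]
    _ = ((dd W σ • (1 : Matrix (Fin n) (Fin n) A)) *ᵥ u) k := by rw [Matrix.adjugate_mul]; rfl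
    _ = dd W σ * u k := by
        rw [Matrix.smul_mulVec, Matrix.one_mulVec]; simp [smul_eq_mul]

lemma dd_swap (W : Matrix (Fin n) (Fin n) A) (σ : Fin n → Option (Fin n)) {c₁ c₂ v₁ v₂ : Fin n}
    (hne : c₁ ≠ c₂) (h₁ : σ c₁ = some v₁) (h₂ : σ c₂ = some v₂) :
    dd W (Function.update (Function.update σ c₁ (some v₂)) c₂ (some v₁)) = - dd W σ := by
  have hmat : BB W (Function.update (Function.update σ c₁ (some v₂)) c₂ (some v₁))
      = (BB W σ).submatrix (Equiv.swap c₁ c₂) id := by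
    ext r c
    rcases eq_or_ne r c₂ with rfl | hr2
    · simp [BB, Matrix.submatrix_apply, Equiv.swap_apply_right, h₁]
    · rcases eq_or_ne r c₁ with rfl | hr1
      · simp [BB, Matrix.submatrix_apply, Equiv.swap_apply_left,
          Function.update_of_ne hr2, h₂]
      · simp [BB, Matrix.submatrix_apply, Equiv.swap_apply_of_ne_of_ne hr1 hr2,
          Function.update_of_ne hr2, Function.update_of_ne hr1]
  rw [dd, hmat, Matrix.det_permute, Equiv.Perm.sign_swap hne]
  simp [dd]

def supp (σ : Fin n → Option (Fin n)) : Finset (Fin n) := univ.filter fun c => (σ c).isSome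

def vals (σ : Fin n → Option (Fin n)) : Finset (Fin n) := univ.filter fun v => ∃ c, σ c = some v

def Inj (σ : Fin n → Option (Fin n)) : Prop :=
  ∀ ⦃c c' v⦄, σ c = some v → σ c' = some v → c = c'

noncomputable def nufun (S K : Finset (Fin n)) (i : Fin n) : Fin n :=
  if h : (Sᶜ.card = Kᶜ.card) ∧ i ∈ Sᶜ then ((Finset.equivOfCardEq h.1) ⟨i, h.2⟩ : {x // x ∈ Kᶜ}).val
  else i

noncomputable def code (σ : Fin n → Option (Fin n)) (i : Fin n) : Fin n :=
  (σ i).elim (nufun (supp σ) (vals σ) i) id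

noncomputable def sg (σ : Fin n → Option (Fin n)) : A :=
  (Matrix.of fun i => (Pi.single (code σ i) 1 : Fin n → A)).det


lemma mem_supp {σ : Fin n → Option (Fin n)} {c : Fin n} : c ∈ supp σ ↔ (σ c).isSome := by
  simp [supp]

lemma mem_vals {σ : Fin n → Option (Fin n)} {v : Fin n} : v ∈ vals σ ↔ ∃ c, σ c = some v := by
  simp [vals]

lemma swap_apply (σ : Fin n → Option (Fin n)) {c₁ c₂ : Fin n} (v₁ v₂ : Fin n) (c : Fin n) :
    (Function.update (Function.update σ c₁ (some v₂)) c₂ (some v₁)) c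
      = if c = c₂ then some v₁ else if c = c₁ then some v₂ else σ c := by
  simp [Function.update_apply]

lemma supp_swap (σ : Fin n → Option (Fin n)) {c₁ c₂ v₁ v₂ : Fin n}
    (h₁ : σ c₁ = some v₁) (h₂ : σ c₂ = some v₂) :
    supp (Function.update (Function.update σ c₁ (some v₂)) c₂ (some v₁)) = supp σ := by
  ext c
  simp only [mem_supp, swap_apply]
  split_ifs with hc2 hc1
  · subst hc2; rw [h₂]; simp
  · subst hc1; rw [h₁]; simp
  · rfl

lemma vals_swap (σ : Fin n → Option (Fin n)) {c₁ c₂ v₁ v₂ : Fin n} (hne : c₁ ≠ c₂)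
    (h₁ : σ c₁ = some v₁) (h₂ : σ c₂ = some v₂) :
    vals (Function.update (Function.update σ c₁ (some v₂)) c₂ (some v₁)) = vals σ := by
  ext v
  simp only [mem_vals, swap_apply]
  constructor
  · rintro ⟨c, hc⟩
    split_ifs at hc with hc2 hc1
    · exact ⟨c₁, by rw [h₁, hc]⟩
    · exact ⟨c₂, by rw [h₂, hc]⟩
    · exact ⟨c, hc⟩
  · rintro ⟨c, hc⟩
    rcases eq_or_ne c c₁ with rfl | hcc1
    · refine ⟨c₂, ?_⟩
      rw [h₁] at hc
      simp [hne.symm, hc]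
    · rcases eq_or_ne c c₂ with rfl | hcc2
      · refine ⟨c₁, ?_⟩
        rw [h₂] at hc
        simp [hne, hc]
      · exact ⟨c, by simp [hcc1, hcc2, hc]⟩

lemma code_swap (σ : Fin n → Option (Fin n)) {c₁ c₂ v₁ v₂ : Fin n} (hne : c₁ ≠ c₂)
    (h₁ : σ c₁ = some v₁) (h₂ : σ c₂ = some v₂) (r : Fin n) :
    code (Function.update (Function.update σ c₁ (some v₂)) c₂ (some v₁)) r
      = code σ (Equiv.swap c₁ c₂ r) := by
  have hs := supp_swap σ h₁ h₂
  have hv := vals_swap σ hne h₁ h₂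
  rcases eq_or_ne r c₂ with rfl | hr2
  · rw [Equiv.swap_apply_right]
    simp [code, swap_apply, h₁]
  · rcases eq_or_ne r c₁ with rfl | hr1
    · rw [Equiv.swap_apply_left]
      simp [code, swap_apply, hr2, h₂]
    · rw [Equiv.swap_apply_of_ne_of_ne hr1 hr2]
      simp only [code, swap_apply, if_neg hr2, if_neg hr1, hs, hv]

lemma sg_swap (σ : Fin n → Option (Fin n)) {c₁ c₂ v₁ v₂ : Fin n} (hne : c₁ ≠ c₂)
    (h₁ : σ c₁ = some v₁) (h₂ : σ c₂ = some v₂) :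
    (sg (Function.update (Function.update σ c₁ (some v₂)) c₂ (some v₁)) : A) = - sg σ := by
  have hmat : (Matrix.of fun i => (Pi.single (code (Function.update (Function.update σ c₁ (some v₂)) c₂ (some v₁)) i) 1 : Fin n → A))
      = (Matrix.of fun i => (Pi.single (code σ i) 1 : Fin n → A)).submatrix (Equiv.swap c₁ c₂) id := by
    ext r c
    rw [Matrix.submatrix_apply, Matrix.of_apply, Matrix.of_apply, code_swap σ hne h₁ h₂ r]
    rfl
  rw [sg, hmat, Matrix.det_permute, Equiv.Perm.sign_swap hne]
  simp [sg]

lemma vals_card {σ : Fin n → Option (Fin n)} (hInj : Inj σ) :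
    (vals σ).card = (supp σ).card := by
  have himg : vals σ = (supp σ).image (fun c => (σ c).getD c) := by
    ext v
    simp only [mem_vals, Finset.mem_image]
    constructor
    · rintro ⟨c, hc⟩
      exact ⟨c, mem_supp.2 (by rw [hc]; rfl), by rw [hc]; rfl⟩
    · rintro ⟨c, hc, hcv⟩
      rcases Option.isSome_iff_exists.1 (mem_supp.1 hc) with ⟨w, hw⟩
      refine ⟨c, ?_⟩
      rw [hw] at hcv ⊢
      simp at hcv
      rw [hcv]
  rw [himg]
  apply Finset.card_image_of_injOn
  intro c hc c' hc' hcc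
  rcases Option.isSome_iff_exists.1 (mem_supp.1 hc) with ⟨w, hw⟩
  rcases Option.isSome_iff_exists.1 (mem_supp.1 hc') with ⟨w', hw'⟩
  simp only [hw, hw', Option.getD_some] at hcc
  subst hcc
  exact hInj hw hw'

lemma nufun_mem {S K : Finset (Fin n)} (hcard : Sᶜ.card = Kᶜ.card) {i : Fin n} (hi : i ∈ Sᶜ) :
    nufun S K i ∈ Kᶜ := by
  rw [nufun, dif_pos ⟨hcard, hi⟩]
  exact ((Finset.equivOfCardEq hcard) ⟨i, hi⟩).2

lemma code_injective {σ : Fin n → Option (Fin n)} (hInj : Inj σ) :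
    Function.Injective (code σ) := by
  have hcard : (supp σ)ᶜ.card = (vals σ)ᶜ.card := by
    rw [Finset.card_compl, Finset.card_compl, vals_card hInj]
  have hvalmem : ∀ {i v}, σ i = some v → code σ i ∈ vals σ := by
    intro i v hv
    rw [code, hv]
    exact mem_vals.2 ⟨i, hv⟩
  have hnonemem : ∀ {i}, σ i = none → code σ i ∈ (vals σ)ᶜ := by
    intro i hv
    rw [code, hv]
    exact nufun_mem hcard (by simp [mem_supp, hv])
  intro i i' h
  cases hi : σ i with
  | some w =>
    cases hi' : σ i' with
    | some w' =>
      rw [code, hi] at h; rw [code, hi'] at h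
      simp only [Option.elim, id] at h
      subst h
      exact hInj hi hi'
    | none =>
      exact absurd (hvalmem hi) (by rw [h]; exact Finset.mem_compl.1 (hnonemem hi'))
  | none =>
    cases hi' : σ i' with
    | some w' =>
      exact absurd (hvalmem hi') (by rw [← h]; exact Finset.mem_compl.1 (hnonemem hi))
    | none =>
      have hmi : i ∈ (supp σ)ᶜ := by simp [mem_supp, hi]
      have hmi' : i' ∈ (supp σ)ᶜ := by simp [mem_supp, hi']
      rw [code, hi] at h; rw [code, hi'] at h
      simp only [Option.elim] at h
      rw [nufun, dif_pos ⟨hcard, hmi⟩, nufun, dif_pos ⟨hcard, hmi'⟩] at h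
      have := (Finset.equivOfCardEq hcard).injective (Subtype.ext h)
      exact congrArg Subtype.val this

lemma sg_mul_self {σ : Fin n → Option (Fin n)} (hInj : Inj σ) : (sg σ : A) * sg σ = 1 := by
  have hbij : Function.Bijective (code σ) :=
    (Finite.injective_iff_bijective).1 (code_injective hInj)
  let e : Equiv.Perm (Fin n) := Equiv.ofBijective _ hbij
  have hmat : (Matrix.of fun i => (Pi.single (code σ i) 1 : Fin n → A)) = e.permMatrix A := by
    ext i j
    simp only [Matrix.of_apply, Pi.single_apply, Equiv.Perm.permMatrix, PEquiv.toMatrix_apply,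
      Equiv.toPEquiv_apply, Option.mem_def, Option.some.injEq]
    have : e i = code σ i := rfl
    rw [this]
    by_cases h : j = code σ i
    · simp [h]
    · simp [h, Ne.symm h]
  have : (sg σ : A) = ((Equiv.Perm.sign e : ℤˣ) : ℤ) := by
    rw [sg, hmat, Matrix.det_permutation]
  rw [this]
  rw [← Int.cast_mul, ← Units.val_mul, Int.units_mul_self, Units.val_one, Int.cast_one]



/-! ### helper lemmas on supp / Inj / update -/

lemma supp_del (σ : Fin n → Option (Fin n)) (c : Fin n) :
    supp (Function.update σ c none) = (supp σ).erase c := by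
  ext r
  rcases eq_or_ne r c with rfl | h
  · simp [mem_supp]
  · simp [mem_supp, Function.update_of_ne h, Finset.mem_erase, h]

lemma supp_upd_some (σ : Fin n → Option (Fin n)) (c k : Fin n) :
    supp (Function.update σ c (some k)) = insert c (supp σ) := by
  ext r
  rcases eq_or_ne r c with rfl | h
  · simp [mem_supp]
  · simp [mem_supp, Function.update_of_ne h, h]

lemma Inj_del {σ : Fin n → Option (Fin n)} (hInj : Inj σ) (c : Fin n) :
    Inj (Function.update σ c none) := by
  intro r r' v hr hr'
  rcases eq_or_ne r c with rfl | h
  · rw [Function.update_self] at hr; cases hr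
  · rcases eq_or_ne r' c with rfl | h'
    · rw [Function.update_self] at hr'; cases hr'
    · rw [Function.update_of_ne h] at hr
      rw [Function.update_of_ne h'] at hr'
      exact hInj hr hr'

def Fresh (σ : Fin n → Option (Fin n)) (k : Fin n) : Prop :=
  ∀ c w, σ c = some w → w ≠ k

lemma Inj_upd_of_fresh {σ : Fin n → Option (Fin n)} (hInj : Inj σ) {k : Fin n}
    (hf : Fresh σ k) (c : Fin n) : Inj (Function.update σ c (some k)) := by
  intro r r' v hr hr'
  rcases eq_or_ne r c with rfl | h
  · rw [Function.update_self] at hr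
    rcases eq_or_ne r' r with rfl | h'
    · rfl
    · rw [Function.update_of_ne h'] at hr'
      cases hr
      exact absurd rfl (hf _ _ hr')
  · rw [Function.update_of_ne h] at hr
    rcases eq_or_ne r' c with rfl | h'
    · rw [Function.update_self] at hr'
      cases hr'
      exact absurd rfl (hf _ _ hr)
    · rw [Function.update_of_ne h'] at hr'
      exact hInj hr hr'

lemma fresh_del {σ : Fin n → Option (Fin n)} (hInj : Inj σ) {c₀ v : Fin n}
    (h : σ c₀ = some v) : Fresh (Function.update σ c₀ none) v := by
  intro c w hc
  rcases eq_or_ne c c₀ with rfl | hcc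
  · rw [Function.update_self] at hc; cases hc
  · rw [Function.update_of_ne hcc] at hc
    intro hwv
    subst hwv
    exact hcc (hInj hc h)

lemma fresh_of_fresh_upd {σ : Fin n → Option (Fin n)} {k k' : Fin n}
    (hf : Fresh σ k) (hkk : k' ≠ k) (c : Fin n) : Fresh (Function.update σ c (some k')) k := by
  intro r w hr
  rcases eq_or_ne r c with rfl | h
  · rw [Function.update_self] at hr; cases hr; exact hkk
  · rw [Function.update_of_ne h] at hr; exact hf _ _ hr

/-- the value of `σ` at a slot in the support, after overwriting that slot,
    becomes fresh (if `σ` is injective). -/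
lemma fresh_upd_overwrite {σ : Fin n → Option (Fin n)} (hInj : Inj σ) {c v k : Fin n}
    (hc : σ c = some v) (hkv : k ≠ v) : Fresh (Function.update σ c (some k)) v := by
  intro r w hr
  rcases eq_or_ne r c with rfl | h
  · rw [Function.update_self] at hr; cases hr; exact hkv
  · rw [Function.update_of_ne h] at hr
    intro hwv; subst hwv
    exact h (hInj hr hc)

section ModuleSide

variable {M : Type} [AddCommGroup M] [Module A M]

def uval (u : Fin n → A) (σ : Fin n → Option (Fin n)) (c : Fin n) : A := (σ c).elim 0 u

lemma uval_upd_some (u : Fin n → A) (σ : Fin n → Option (Fin n)) (c k : Fin n) :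
    uval u (Function.update σ c (some k)) = Function.update (uval u σ) c (u k) := by
  funext r
  rcases eq_or_ne r c with rfl | h
  · simp [uval]
  · simp [uval, Function.update_of_ne h]

lemma uval_del (u : Fin n → A) (σ : Fin n → Option (Fin n)) (c : Fin n) :
    uval u (Function.update σ c none) = Function.update (uval u σ) c 0 := by
  funext r
  rcases eq_or_ne r c with rfl | h
  · simp [uval]
  · simp [uval, Function.update_of_ne h]

/-- The principal part of the tower equation at `σ`. -/
noncomputable def PF (u : Fin n → A) (Dec : (Fin n → Option (Fin n)) → M → Fin n → M)
    (σ : Fin n → Option (Fin n)) (m : M) : M :=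
  (supp σ).max.recBotCoe 0 (fun i₀ =>
    (σ i₀).elim 0 (fun v =>
      u v • Dec (Function.update σ i₀ none) m i₀
        - ∑ c, uval u (Function.update σ i₀ none) c •
            Dec (Function.update (Function.update σ i₀ none) c (some v)) m i₀))

lemma PF_eq (u : Fin n → A) (Dec : (Fin n → Option (Fin n)) → M → Fin n → M)
    (σ : Fin n → Option (Fin n)) {i₀ v : Fin n}
    (hmax : (supp σ).max = some i₀) (hv : σ i₀ = some v) (m : M) :
    PF u Dec σ m = u v • Dec (Function.update σ i₀ none) m i₀
      - ∑ c, uval u (Function.update σ i₀ none) c •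
          Dec (Function.update (Function.update σ i₀ none) c (some v)) m i₀ := by
  rw [PF, hmax]
  rw [show ((some i₀ : WithBot (Fin n))) = ((i₀ : Fin n) : WithBot (Fin n)) from rfl,
    WithBot.recBotCoe_coe, hv]
  rfl

lemma PF_bot (u : Fin n → A) (Dec : (Fin n → Option (Fin n)) → M → Fin n → M)
    (σ : Fin n → Option (Fin n)) (hmax : (supp σ).max = ⊥) (m : M) :
    PF u Dec σ m = 0 := by
  rw [PF, hmax]
  rfl

end ModuleSide



section BigLemmas

variable {M : Type} [AddCommGroup M] [Module A M]

lemma sum_split (g : Fin n → M) (c₀ : Fin n) :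
    ∑ c, g c = g c₀ + ∑ c ∈ univ \ {c₀}, g c := by
  rw [Finset.sum_eq_sum_sdiff_singleton_add (Finset.mem_univ c₀)]
  exact add_comm _ _

lemma double_sum_zero (g : Fin n → Fin n → M)
    (hanti : ∀ c c', c ≠ c' → g c c' + g c' c = 0) :
    ∑ c, ∑ c' ∈ univ \ {c}, g c c' = 0 := by
  classical
  have : ∑ c, ∑ c' ∈ univ \ {c}, g c c'
      = ∑ a ∈ (univ : Finset (Fin n)).sigma (fun c => univ \ {c}), g a.1 a.2 := by
    rw [Finset.sum_sigma]
  rw [this]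
  refine Finset.sum_involution (fun a _ => ⟨a.2, a.1⟩) ?_ ?_ ?_ ?_
  · intro a ha
    rcases Finset.mem_sigma.1 ha with ⟨-, h2⟩
    have hne : a.2 ≠ a.1 := by
      rcases Finset.mem_sdiff.1 h2 with ⟨-, hnot⟩
      simpa using hnot
    exact hanti a.1 a.2 (Ne.symm hne)
  · intro a ha _
    rcases Finset.mem_sigma.1 ha with ⟨-, h2⟩
    have hne : a.2 ≠ a.1 := by
      rcases Finset.mem_sdiff.1 h2 with ⟨-, hnot⟩
      simpa using hnot
    intro hcontra
    have := congrArg Sigma.fst hcontra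
    exact hne this
  · intro a ha
    rcases Finset.mem_sigma.1 ha with ⟨-, h2⟩
    have hne : a.2 ≠ a.1 := by
      rcases Finset.mem_sdiff.1 h2 with ⟨-, hnot⟩
      simpa using hnot
    refine Finset.mem_sigma.2 ⟨Finset.mem_univ _, ?_⟩
    refine Finset.mem_sdiff.2 ⟨Finset.mem_univ _, ?_⟩
    simpa using hne.symm
  · intro a ha
    rfl

section PFswap

variable (u : Fin n → A) {M : Type} [AddCommGroup M] [Module A M]
variable (Dec : (Fin n → Option (Fin n)) → M → Fin n → M) {p : ℕ}

/-- Case B : the maximal assigned slot is `c₂` itself. -/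
lemma PF_swap_caseB
    (hS2 : ∀ (σ₀ : Fin n → Option (Fin n)) (m : M) {c c' w w' : Fin n}, Inj σ₀ →
      (supp σ₀).card ≤ p → c ≠ c' → σ₀ c = some w → σ₀ c' = some w' →
      Dec (Function.update (Function.update σ₀ c (some w')) c' (some w)) m = - Dec σ₀ m)
    (σ : Fin n → Option (Fin n)) (m : M) {c₁ c₂ v₁ v₂ : Fin n}
    (hInj : Inj σ) (hcard : (supp σ).card ≤ p + 1) (hne : c₁ ≠ c₂)
    (h₁ : σ c₁ = some v₁) (h₂ : σ c₂ = some v₂)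
    (hmax : (supp σ).max = some c₂) :
    PF u Dec (Function.update (Function.update σ c₁ (some v₂)) c₂ (some v₁)) m
      = - PF u Dec σ m := by
  classical
  have hi₀mem : c₂ ∈ supp σ := Finset.mem_of_max hmax
  have hsupp' := supp_swap σ h₁ h₂
  have hmax' : (supp (Function.update (Function.update σ c₁ (some v₂)) c₂ (some v₁))).max
      = some c₂ := by rw [hsupp']; exact hmax
  have hcardτ : (supp (Function.update σ c₂ none)).card ≤ p := by
    rw [supp_del, Finset.card_erase_of_mem hi₀mem]
    omega
  have hτInj : Inj (Function.update σ c₂ none) := Inj_del hInj c₂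
  have hfresh2 : Fresh (Function.update σ c₂ none) v₂ := fresh_del hInj h₂
  set τ := Function.update σ c₂ none with hτ
  have hτc₁ : τ c₁ = some v₁ := by rw [hτ, Function.update_of_ne hne, h₁]
  have hσ'i : (Function.update (Function.update σ c₁ (some v₂)) c₂ (some v₁)) c₂ = some v₁ :=
    Function.update_self _ _ _
  have hdel' : Function.update (Function.update (Function.update σ c₁ (some v₂)) c₂ (some v₁)) c₂ none
      = Function.update τ c₁ (some v₂) := by
    rw [Function.update_idem, hτ, Function.update_comm hne]
  rw [PF_eq u Dec _ hmax' hσ'i m, PF_eq u Dec σ hmax h₂ m, hdel', ← hτ]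
  have hsum1 : ∑ c, uval u (Function.update τ c₁ (some v₂)) c •
        Dec (Function.update (Function.update τ c₁ (some v₂)) c (some v₁)) m c₂
      = u v₂ • Dec τ m c₂ + ∑ c ∈ univ \ {c₁}, uval u τ c •
          Dec (Function.update (Function.update τ c₁ (some v₂)) c (some v₁)) m c₂ := by
    rw [sum_split _ c₁]
    congr 1
    · rw [uval_upd_some, Function.update_self, Function.update_idem]
      rw [show Function.update τ c₁ (some v₁) = τ by
        conv_lhs => rw [← hτc₁]
        exact Function.update_eq_self _ _]
    · refine Finset.sum_congr rfl fun c hc => ?_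
      have hcne : c ≠ c₁ := by
        rcases Finset.mem_sdiff.1 hc with ⟨-, h⟩; simpa using h
      rw [uval_upd_some, Function.update_of_ne hcne]
  have hsum2 : ∑ c, uval u τ c • Dec (Function.update τ c (some v₂)) m c₂
      = u v₁ • Dec (Function.update τ c₁ (some v₂)) m c₂
        + ∑ c ∈ univ \ {c₁}, uval u τ c • Dec (Function.update τ c (some v₂)) m c₂ := by
    rw [sum_split _ c₁]
    congr 1
    rw [show uval u τ c₁ = u v₁ by rw [uval, hτc₁]; rfl]
  rw [hsum1, hsum2]
  have hzero : ∑ c ∈ univ \ {c₁}, (uval u τ c •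
        Dec (Function.update (Function.update τ c₁ (some v₂)) c (some v₁)) m c₂
      + uval u τ c • Dec (Function.update τ c (some v₂)) m c₂) = 0 := by
    refine Finset.sum_eq_zero fun c hc => ?_
    have hcne : c ≠ c₁ := by
      rcases Finset.mem_sdiff.1 hc with ⟨-, h⟩; simpa using h
    cases hτc : τ c with
    | none => rw [show uval u τ c = 0 by rw [uval, hτc]; rfl]; simp
    | some w =>
      have hInj₀ : Inj (Function.update τ c (some v₂)) := Inj_upd_of_fresh hτInj hfresh2 c
      have hcard₀ : (supp (Function.update τ c (some v₂))).card ≤ p := by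
        rw [supp_upd_some, Finset.insert_eq_self.2 (mem_supp.2 (by rw [hτc]; rfl))]
        exact hcardτ
      have hb₁ : (Function.update τ c (some v₂)) c₁ = some v₁ := by
        rw [Function.update_of_ne (Ne.symm hcne), hτc₁]
      have hb₂ : (Function.update τ c (some v₂)) c = some v₂ := Function.update_self _ _ _
      have hs2 := hS2 (Function.update τ c (some v₂)) m hInj₀ hcard₀ (Ne.symm hcne) hb₁ hb₂
      have harg : Function.update (Function.update (Function.update τ c (some v₂)) c₁ (some v₂)) c (some v₁)
          = Function.update (Function.update τ c₁ (some v₂)) c (some v₁) := by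
        rw [Function.update_comm hcne (some v₂) (some v₂) τ, Function.update_idem]
      rw [harg] at hs2
      rw [hs2]
      simp [smul_neg]
  rw [Finset.sum_add_distrib] at hzero
  rw [eq_neg_of_add_eq_zero_left hzero]
  abel

/-- Case A : the maximal assigned slot is neither `c₁` nor `c₂`. -/
lemma PF_swap_caseA
    (hS2 : ∀ (σ₀ : Fin n → Option (Fin n)) (m : M) {c c' w w' : Fin n}, Inj σ₀ →
      (supp σ₀).card ≤ p → c ≠ c' → σ₀ c = some w → σ₀ c' = some w' →
      Dec (Function.update (Function.update σ₀ c (some w')) c' (some w)) m = - Dec σ₀ m)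
    (σ : Fin n → Option (Fin n)) (m : M) {c₁ c₂ v₁ v₂ i₀ v₀ : Fin n}
    (hInj : Inj σ) (hcard : (supp σ).card ≤ p + 1) (hne : c₁ ≠ c₂)
    (h₁ : σ c₁ = some v₁) (h₂ : σ c₂ = some v₂)
    (hmax : (supp σ).max = some i₀) (hv₀ : σ i₀ = some v₀)
    (hi₁ : i₀ ≠ c₁) (hi₂ : i₀ ≠ c₂) :
    PF u Dec (Function.update (Function.update σ c₁ (some v₂)) c₂ (some v₁)) m
      = - PF u Dec σ m := by
  classical
  have hi₀mem : i₀ ∈ supp σ := Finset.mem_of_max hmax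
  have hsupp' := supp_swap σ h₁ h₂
  have hmax' : (supp (Function.update (Function.update σ c₁ (some v₂)) c₂ (some v₁))).max
      = some i₀ := by rw [hsupp']; exact hmax
  have hcardτ : (supp (Function.update σ i₀ none)).card ≤ p := by
    rw [supp_del, Finset.card_erase_of_mem hi₀mem]
    omega
  have hτInj : Inj (Function.update σ i₀ none) := Inj_del hInj i₀
  have hfresh0 : Fresh (Function.update σ i₀ none) v₀ := fresh_del hInj hv₀
  set τ := Function.update σ i₀ none with hτ
  have hτc₁ : τ c₁ = some v₁ := by rw [hτ, Function.update_of_ne (Ne.symm hi₁), h₁]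
  have hτc₂ : τ c₂ = some v₂ := by rw [hτ, Function.update_of_ne (Ne.symm hi₂), h₂]
  have hσ'i : (Function.update (Function.update σ c₁ (some v₂)) c₂ (some v₁)) i₀ = some v₀ := by
    rw [Function.update_of_ne hi₂, Function.update_of_ne hi₁, hv₀]
  have hdel' : Function.update (Function.update (Function.update σ c₁ (some v₂)) c₂ (some v₁)) i₀ none
      = Function.update (Function.update τ c₁ (some v₂)) c₂ (some v₁) := by
    rw [Function.update_comm hi₂.symm, Function.update_comm hi₁.symm, ← hτ]
  rw [PF_eq u Dec _ hmax' hσ'i m, PF_eq u Dec σ hmax hv₀ m, hdel']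
  -- the first term
  have hfirst : Dec (Function.update (Function.update τ c₁ (some v₂)) c₂ (some v₁)) m
      = - Dec τ m := hS2 τ m hτInj hcardτ hne hτc₁ hτc₂
  -- the sums, via reindexing with the swap
  have hupdeq : ∀ (f : Fin n → Option (Fin n)) (a b : Fin n) (va vb : Option (Fin n)),
      a ≠ b → Function.update (Function.update f a va) b vb
        = Function.update (Function.update f b vb) a va := fun f a b va vb h =>
    Function.update_comm h va vb f
  have hsums : ∑ c, uval u (Function.update (Function.update τ c₁ (some v₂)) c₂ (some v₁)) c •
        Dec (Function.update (Function.update (Function.update τ c₁ (some v₂)) c₂ (some v₁)) c (some v₀)) m i₀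
      = - ∑ c, uval u τ c • Dec (Function.update τ c (some v₀)) m i₀ := by
    rw [← Equiv.sum_comp (Equiv.swap c₁ c₂)
      (fun c => uval u τ c • Dec (Function.update τ c (some v₀)) m i₀), ← Finset.sum_neg_distrib]
    refine Finset.sum_congr rfl fun c _ => ?_
    rcases eq_or_ne c c₁ with rfl | hcc1
    · -- c = c₁
      rw [Equiv.swap_apply_left]
      have hcoef : uval u (Function.update (Function.update τ c (some v₂)) c₂ (some v₁)) c = u v₂ := by
        rw [uval, Function.update_of_ne hne, Function.update_self]; rfl
      have hcoef' : uval u τ c₂ = u v₂ := by rw [uval, hτc₂]; rfl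
      rw [hcoef, hcoef']
      have hInj₀ : Inj (Function.update τ c₂ (some v₀)) := Inj_upd_of_fresh hτInj hfresh0 c₂
      have hcard₀ : (supp (Function.update τ c₂ (some v₀))).card ≤ p := by
        rw [supp_upd_some, Finset.insert_eq_self.2 (mem_supp.2 (by rw [hτc₂]; rfl))]
        exact hcardτ
      have hb₁ : (Function.update τ c₂ (some v₀)) c = some v₁ := by
        rw [Function.update_of_ne hne, hτc₁]
      have hb₂ : (Function.update τ c₂ (some v₀)) c₂ = some v₀ := Function.update_self _ _ _
      have hs2 := hS2 (Function.update τ c₂ (some v₀)) m hInj₀ hcard₀ hne hb₁ hb₂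
      have harg : Function.update (Function.update (Function.update τ c₂ (some v₀)) c (some v₀)) c₂ (some v₁)
          = Function.update (Function.update (Function.update τ c (some v₂)) c₂ (some v₁)) c (some v₀) := by
        funext r
        rcases eq_or_ne r c with rfl | hr1
        · simp [Function.update_apply, hne]
        · rcases eq_or_ne r c₂ with rfl | hr2
          · simp [Function.update_apply, hr1]
          · simp [Function.update_apply, hr1, hr2]
      rw [harg] at hs2
      rw [hs2]
      simp
    · rcases eq_or_ne c c₂ with rfl | hcc2
      · -- c = c₂
        rw [Equiv.swap_apply_right]
        have hcoef : uval u (Function.update (Function.update τ c₁ (some v₂)) c (some v₁)) c = u v₁ := by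
          rw [uval, Function.update_self]; rfl
        have hcoef' : uval u τ c₁ = u v₁ := by rw [uval, hτc₁]; rfl
        rw [hcoef, hcoef']
        have hInj₀ : Inj (Function.update τ c₁ (some v₀)) := Inj_upd_of_fresh hτInj hfresh0 c₁
        have hcard₀ : (supp (Function.update τ c₁ (some v₀))).card ≤ p := by
          rw [supp_upd_some, Finset.insert_eq_self.2 (mem_supp.2 (by rw [hτc₁]; rfl))]
          exact hcardτ
        have hb₁ : (Function.update τ c₁ (some v₀)) c₁ = some v₀ := Function.update_self _ _ _
        have hb₂ : (Function.update τ c₁ (some v₀)) c = some v₂ := by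
          rw [Function.update_of_ne (Ne.symm hne), hτc₂]
        have hs2 := hS2 (Function.update τ c₁ (some v₀)) m hInj₀ hcard₀ hne hb₁ hb₂
        have harg : Function.update (Function.update (Function.update τ c₁ (some v₀)) c₁ (some v₂)) c (some v₀)
            = Function.update (Function.update (Function.update τ c₁ (some v₂)) c (some v₁)) c (some v₀) := by
          funext r
          rcases eq_or_ne r c with rfl | hr1
          · simp [Function.update_apply]
          · rcases eq_or_ne r c₁ with rfl | hr2
            · simp [Function.update_apply, hne, hr1]
            · simp [Function.update_apply, hr1, hr2]
        rw [harg] at hs2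
        rw [hs2]
        simp
      · -- c ∉ {c₁, c₂}
        rw [Equiv.swap_apply_of_ne_of_ne hcc1 hcc2]
        have hcoef : uval u (Function.update (Function.update τ c₁ (some v₂)) c₂ (some v₁)) c
            = uval u τ c := by
          rw [uval, Function.update_of_ne hcc2, Function.update_of_ne hcc1]; rfl
        rw [hcoef]
        cases hτc : τ c with
        | none =>
          rw [show uval u τ c = 0 by rw [uval, hτc]; rfl]
          simp
        | some w =>
          have hInj₀ : Inj (Function.update τ c (some v₀)) := Inj_upd_of_fresh hτInj hfresh0 c
          have hcard₀ : (supp (Function.update τ c (some v₀))).card ≤ p := by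
            rw [supp_upd_some, Finset.insert_eq_self.2 (mem_supp.2 (by rw [hτc]; rfl))]
            exact hcardτ
          have hb₁ : (Function.update τ c (some v₀)) c₁ = some v₁ := by
            rw [Function.update_of_ne (Ne.symm hcc1), hτc₁]
          have hb₂ : (Function.update τ c (some v₀)) c₂ = some v₂ := by
            rw [Function.update_of_ne (Ne.symm hcc2), hτc₂]
          have hs2 := hS2 (Function.update τ c (some v₀)) m hInj₀ hcard₀ hne hb₁ hb₂
          have harg : Function.update (Function.update (Function.update τ c (some v₀)) c₁ (some v₂)) c₂ (some v₁)
              = Function.update (Function.update (Function.update τ c₁ (some v₂)) c₂ (some v₁)) c (some v₀) := by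
            funext r
            rcases eq_or_ne r c with rfl | hr1
            · simp [Function.update_apply, hcc1, hcc2]
            · rcases eq_or_ne r c₂ with rfl | hr2
              · simp [Function.update_apply, hr1]
              · rcases eq_or_ne r c₁ with rfl | hr3
                · simp [Function.update_apply, hr1, hr2]
                · simp [Function.update_apply, hr1, hr2, hr3]
          rw [harg] at hs2
          rw [hs2]
          simp
  rw [hfirst, hsums]
  simp only [Pi.neg_apply, smul_neg]
  abel

end PFswap


/-- Antisymmetry of the principal part under swapping two assigned values. -/
lemma PF_swap {M : Type} [AddCommGroup M] [Module A M]
    (u : Fin n → A) (Dec : (Fin n → Option (Fin n)) → M → Fin n → M) {p : ℕ}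
    (hS2 : ∀ (σ₀ : Fin n → Option (Fin n)) (m : M) {c c' w w' : Fin n}, Inj σ₀ →
      (supp σ₀).card ≤ p → c ≠ c' → σ₀ c = some w → σ₀ c' = some w' →
      Dec (Function.update (Function.update σ₀ c (some w')) c' (some w)) m = - Dec σ₀ m)
    (σ : Fin n → Option (Fin n)) (m : M) {c₁ c₂ v₁ v₂ : Fin n}
    (hInj : Inj σ) (hcard : (supp σ).card ≤ p + 1) (hne : c₁ ≠ c₂)
    (h₁ : σ c₁ = some v₁) (h₂ : σ c₂ = some v₂) :
    PF u Dec (Function.update (Function.update σ c₁ (some v₂)) c₂ (some v₁)) m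
      = - PF u Dec σ m := by
  classical
  have hc₁s : c₁ ∈ supp σ := mem_supp.2 (by rw [h₁]; rfl)
  obtain ⟨i₀, hmax⟩ := Finset.max_of_nonempty ⟨c₁, hc₁s⟩
  have hi₀mem : i₀ ∈ supp σ := Finset.mem_of_max hmax
  obtain ⟨v₀, hv₀⟩ := Option.isSome_iff_exists.1 (mem_supp.1 hi₀mem)
  by_cases hi₁ : i₀ = c₁
  · rw [Function.update_comm hne (some v₂) (some v₁) σ]
    exact PF_swap_caseB u Dec hS2 σ m hInj hcard (Ne.symm hne) h₂ h₁ (by rw [hmax, hi₁]; rfl)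
  · by_cases hi₂ : i₀ = c₂
    · exact PF_swap_caseB u Dec hS2 σ m hInj hcard hne h₁ h₂ (by rw [hmax, hi₂]; rfl)
    · exact PF_swap_caseA u Dec hS2 σ m hInj hcard hne h₁ h₂ hmax hv₀ hi₁ hi₂


lemma fresh_del_preserve {σ : Fin n → Option (Fin n)} {k : Fin n} (hf : Fresh σ k) (c : Fin n) :
    Fresh (Function.update σ c none) k := by
  intro r w hr
  rcases eq_or_ne r c with rfl | h
  · rw [Function.update_self] at hr; cases hr
  · rw [Function.update_of_ne h] at hr; exact hf _ _ hr

section CCsec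

variable {M : Type} [AddCommGroup M] [Module A M]
variable (u : Fin n → A) (Dec : (Fin n → Option (Fin n)) → M → Fin n → M) {p : ℕ}

/-- The cancellation identity for the principal parts. -/
lemma CC
    (hS2 : ∀ (σ₀ : Fin n → Option (Fin n)) (m : M) {c c' w w' : Fin n}, Inj σ₀ →
      (supp σ₀).card ≤ p → c ≠ c' → σ₀ c = some w → σ₀ c' = some w' →
      Dec (Function.update (Function.update σ₀ c (some w')) c' (some w)) m = - Dec σ₀ m)
    (τ' : Fin n → Option (Fin n)) (m : M) (k : Fin n)
    (hInj : Inj τ') (hcard : (supp τ').card ≤ p + 1) (hfresh : Fresh τ' k) :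
    u k • PF u Dec τ' m = ∑ c, uval u τ' c • PF u Dec (Function.update τ' c (some k)) m := by
  classical
  by_cases hb : (supp τ').max = ⊥
  · have hsupp : supp τ' = ∅ := Finset.max_eq_bot.1 hb
    have hnone : ∀ c, τ' c = none := by
      intro c
      by_contra h
      have : c ∈ supp τ' := mem_supp.2 (Option.ne_none_iff_isSome.1 h)
      rw [hsupp] at this
      exact absurd this (Finset.notMem_empty c)
    rw [PF_bot u Dec τ' hb m, smul_zero]
    symm
    refine Finset.sum_eq_zero fun c _ => ?_
    rw [show uval u τ' c = 0 by rw [uval, hnone c]; rfl, zero_smul]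
  · obtain ⟨i₀, hmax⟩ := Option.ne_none_iff_exists'.1 hb
    have hi₀mem : i₀ ∈ supp τ' := Finset.mem_of_max hmax
    obtain ⟨v, hv⟩ := Option.isSome_iff_exists.1 (mem_supp.1 hi₀mem)
    set τ := Function.update τ' i₀ none with hτdef
    have hτInj : Inj τ := Inj_del hInj i₀
    have hcardτ : (supp τ).card ≤ p := by
      rw [hτdef, supp_del, Finset.card_erase_of_mem hi₀mem]
      omega
    have hfτv : Fresh τ v := fresh_del hInj hv
    have hfτk : Fresh τ k := fresh_del_preserve hfresh i₀
    have hkv : k ≠ v := Ne.symm (hfresh i₀ v hv)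
    have hτi₀ : τ i₀ = none := Function.update_self _ _ _
    have hτc : ∀ c, c ≠ i₀ → τ c = τ' c := fun c hc => Function.update_of_ne hc _ _
    have huvi₀ : uval u τ i₀ = 0 := by rw [uval, hτi₀]; rfl
    -- LHS expansion
    rw [PF_eq u Dec τ' hmax hv m]
    -- RHS : first split off the i₀ term
    have hRHS1 : ∑ c, uval u τ' c • PF u Dec (Function.update τ' c (some k)) m
        = u v • PF u Dec (Function.update τ' i₀ (some k)) m
          + ∑ c ∈ univ \ {i₀}, uval u τ c • PF u Dec (Function.update τ' c (some k)) m := by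
      rw [sum_split (fun c => uval u τ' c • PF u Dec (Function.update τ' c (some k)) m) i₀]
      congr 1
      · rw [show uval u τ' i₀ = u v by rw [uval, hv]; rfl]
      · refine Finset.sum_congr rfl fun c hc => ?_
        have hcne : c ≠ i₀ := by rcases Finset.mem_sdiff.1 hc with ⟨-, h⟩; simpa using h
        rw [show uval u τ c = uval u τ' c by rw [uval, hτc c hcne]; rfl]
    -- the i₀ term
    have hPFi₀ : PF u Dec (Function.update τ' i₀ (some k)) m
        = u k • Dec τ m i₀ - ∑ c, uval u τ c • Dec (Function.update τ c (some k)) m i₀ := by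
      have hmax' : (supp (Function.update τ' i₀ (some k))).max = some i₀ := by
        rw [supp_upd_some, Finset.insert_eq_self.2 hi₀mem]; exact hmax
      have hval : (Function.update τ' i₀ (some k)) i₀ = some k := Function.update_self _ _ _
      rw [PF_eq u Dec _ hmax' hval m, Function.update_idem, ← hτdef]
    -- the other terms
    have hPFc : ∀ c ∈ (univ : Finset (Fin n)) \ {i₀},
        uval u τ c • PF u Dec (Function.update τ' c (some k)) m
          = uval u τ c • (u v • Dec (Function.update τ c (some k)) m i₀)
            - uval u τ c • (u k • Dec (Function.update τ c (some v)) m i₀)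
            - uval u τ c • (∑ c' ∈ univ \ {c}, uval u τ c' •
                Dec (Function.update (Function.update τ c (some k)) c' (some v)) m i₀) := by
      intro c hc
      have hcne : c ≠ i₀ := by rcases Finset.mem_sdiff.1 hc with ⟨-, h⟩; simpa using h
      cases hτcv : τ c with
      | none =>
        rw [show uval u τ c = 0 by rw [uval, hτcv]; rfl]
        simp
      | some w =>
        have hmem : c ∈ supp τ' := mem_supp.2 (by rw [← hτc c hcne, hτcv]; rfl)
        have hmax' : (supp (Function.update τ' c (some k))).max = some i₀ := by
          rw [supp_upd_some, Finset.insert_eq_self.2 hmem]; exact hmax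
        have hval : (Function.update τ' c (some k)) i₀ = some v := by
          rw [Function.update_of_ne (Ne.symm hcne), hv]
        have hdel : Function.update (Function.update τ' c (some k)) i₀ none
            = Function.update τ c (some k) := by
          rw [Function.update_comm hcne (some k) none τ', ← hτdef]
        rw [PF_eq u Dec _ hmax' hval m, hdel]
        rw [sum_split (fun c' => uval u (Function.update τ c (some k)) c' •
          Dec (Function.update (Function.update τ c (some k)) c' (some v)) m i₀) c]
        rw [show uval u (Function.update τ c (some k)) c = u k by
          rw [uval, Function.update_self]; rfl]
        rw [Function.update_idem]
        have hinner : ∑ c' ∈ univ \ {c}, uval u (Function.update τ c (some k)) c' •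
              Dec (Function.update (Function.update τ c (some k)) c' (some v)) m i₀
            = ∑ c' ∈ univ \ {c}, uval u τ c' •
              Dec (Function.update (Function.update τ c (some k)) c' (some v)) m i₀ := by
          refine Finset.sum_congr rfl fun c' hc' => ?_
          have hc'ne : c' ≠ c := by rcases Finset.mem_sdiff.1 hc' with ⟨-, h⟩; simpa using h
          rw [show uval u (Function.update τ c (some k)) c' = uval u τ c' by
            rw [uval, Function.update_of_ne hc'ne]; rfl]
        rw [hinner, smul_sub, smul_add]
        abel
    rw [hRHS1, hPFi₀, Finset.sum_congr rfl hPFc]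
    -- extend the restricted outer sums to sums over univ
    have hext : ∀ F : Fin n → M, ∑ c ∈ univ \ {i₀}, (uval u τ c • F c) = ∑ c, uval u τ c • F c := by
      intro F
      rw [sum_split (fun c => uval u τ c • F c) i₀, huvi₀, zero_smul, zero_add]
    rw [Finset.sum_sub_distrib, Finset.sum_sub_distrib]
    rw [hext (fun c => u v • Dec (Function.update τ c (some k)) m i₀)]
    rw [hext (fun c => u k • Dec (Function.update τ c (some v)) m i₀)]
    rw [hext (fun c => ∑ c' ∈ univ \ {c}, uval u τ c' •
      Dec (Function.update (Function.update τ c (some k)) c' (some v)) m i₀)]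
    -- the double sum vanishes
    have hds : ∑ c, uval u τ c • (∑ c' ∈ univ \ {c}, uval u τ c' •
        Dec (Function.update (Function.update τ c (some k)) c' (some v)) m i₀) = 0 := by
      have : ∀ c, uval u τ c • (∑ c' ∈ univ \ {c}, uval u τ c' •
            Dec (Function.update (Function.update τ c (some k)) c' (some v)) m i₀)
          = ∑ c' ∈ univ \ {c}, uval u τ c • (uval u τ c' •
            Dec (Function.update (Function.update τ c (some k)) c' (some v)) m i₀) := by
        intro c; rw [Finset.smul_sum]
      rw [Finset.sum_congr rfl fun c _ => this c]
      refine double_sum_zero _ ?_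
      intro c c' hcc
      cases hτcv : τ c with
      | none =>
        rw [show uval u τ c = 0 by rw [uval, hτcv]; rfl]
        simp
      | some w =>
        cases hτcv' : τ c' with
        | none =>
          rw [show uval u τ c' = 0 by rw [uval, hτcv']; rfl]
          simp
        | some w' =>
          have hInj₁ : Inj (Function.update τ c (some k)) := Inj_upd_of_fresh hτInj hfτk c
          have hf₁ : Fresh (Function.update τ c (some k)) v := fresh_of_fresh_upd hfτv hkv c
          have hInj₀ : Inj (Function.update (Function.update τ c (some k)) c' (some v)) :=
            Inj_upd_of_fresh hInj₁ hf₁ c'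
          have hcard₀ : (supp (Function.update (Function.update τ c (some k)) c' (some v))).card ≤ p := by
            rw [supp_upd_some, supp_upd_some,
              Finset.insert_eq_self.2 (mem_supp.2 (by rw [hτcv]; rfl)),
              Finset.insert_eq_self.2 (mem_supp.2 (by rw [hτcv']; rfl))]
            exact hcardτ
          have hb₁ : (Function.update (Function.update τ c (some k)) c' (some v)) c = some k := by
            rw [Function.update_of_ne hcc, Function.update_self]
          have hb₂ : (Function.update (Function.update τ c (some k)) c' (some v)) c' = some v :=
            Function.update_self _ _ _
          have hs2 := hS2 _ m hInj₀ hcard₀ hcc hb₁ hb₂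
          have harg : Function.update (Function.update (Function.update (Function.update τ c (some k)) c' (some v)) c (some v)) c' (some k)
              = Function.update (Function.update τ c' (some k)) c (some v) := by
            funext r
            rcases eq_or_ne r c with rfl | hr1
            · simp [Function.update_apply, hcc]
            · rcases eq_or_ne r c' with rfl | hr2
              · simp [Function.update_apply, hr1]
              · simp [Function.update_apply, hr1, hr2]
          rw [harg] at hs2
          rw [hs2]
          rw [smul_comm (uval u τ c') (uval u τ c)]
          simp
    rw [hds, sub_zero]
    -- final algebra
    have h1 : u v • ∑ c, uval u τ c • Dec (Function.update τ c (some k)) m i₀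
        = ∑ c, uval u τ c • (u v • Dec (Function.update τ c (some k)) m i₀) := by
      rw [Finset.smul_sum]
      exact Finset.sum_congr rfl fun c _ => smul_comm _ _ _
    have h2 : u k • ∑ c, uval u τ c • Dec (Function.update τ c (some v)) m i₀
        = ∑ c, uval u τ c • (u k • Dec (Function.update τ c (some v)) m i₀) := by
      rw [Finset.smul_sum]
      exact Finset.sum_congr rfl fun c _ => smul_comm _ _ _
    rw [smul_sub, smul_sub, h2, ← h1, smul_comm (u v) (u k)]
    abel

end CCsec

end BigLemmas

section Main

variable {M : Type} [AddCommGroup M] [Module A M]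

/-- The submodule `Jₓ M`. -/
def Phi (x : Fin n → A) : Submodule A M := Ideal.span (Set.range x) • (⊤ : Submodule A M)

lemma decPhi (x : Fin n → A) (v : M) (hv : v ∈ Phi x) :
    ∃ w : Fin n → M, v = ∑ l, x l • w l := by
  refine Submodule.smul_induction_on hv ?_ ?_
  · intro r hr mm _
    obtain ⟨c, hc⟩ := (Submodule.mem_span_range_iff_exists_fun A).1 hr
    refine ⟨fun l => c l • mm, ?_⟩
    rw [← hc, Finset.sum_smul]
    exact Finset.sum_congr rfl fun l _ => by
      rw [smul_eq_mul, mul_comm, mul_smul]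
  · rintro y z ⟨wy, hy⟩ ⟨wz, hz⟩
    refine ⟨wy + wz, ?_⟩
    rw [hy, hz, ← Finset.sum_add_distrib]
    exact Finset.sum_congr rfl fun l _ => by
      rw [Pi.add_apply, smul_add]

open Classical in
noncomputable def chooseDec (x : Fin n → A) (v : M) : Fin n → M :=
  if h : ∃ w : Fin n → M, v = ∑ l, x l • w l then h.choose else 0

lemma chooseDec_spec (x : Fin n → A) (v : M) (h : ∃ w : Fin n → M, v = ∑ l, x l • w l) :
    v = ∑ l, x l • chooseDec x v l := by
  unfold chooseDec
  split
  next h' => exact h'.choose_spec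
  next h' => exact absurd h h'

variable (x u : Fin n → A) (W : Matrix (Fin n) (Fin n) A)

/-- The inductive invariant of the tower. -/
def Spec (Dec : (Fin n → Option (Fin n)) → M → Fin n → M) (p : ℕ) : Prop :=
  (∀ σ m, Inj σ → (supp σ).card ≤ p →
    dd W σ • m = PF u Dec σ m + ∑ l, x l • Dec σ m l)
  ∧ (∀ (σ₀ : Fin n → Option (Fin n)) (m : M) {c c' w w' : Fin n}, Inj σ₀ →
      (supp σ₀).card ≤ p → c ≠ c' → σ₀ c = some w → σ₀ c' = some w' →
      Dec (Function.update (Function.update σ₀ c (some w')) c' (some w)) m = - Dec σ₀ m)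

lemma PF_congr (Dec₁ Dec₂ : (Fin n → Option (Fin n)) → M → Fin n → M)
    (σ : Fin n → Option (Fin n)) (m : M)
    (h : ∀ σ' m', (supp σ').card < (supp σ).card → Dec₁ σ' m' = Dec₂ σ' m') :
    PF u Dec₁ σ m = PF u Dec₂ σ m := by
  classical
  by_cases hb : (supp σ).max = ⊥
  · rw [PF_bot u Dec₁ σ hb m, PF_bot u Dec₂ σ hb m]
  · obtain ⟨i₀, hmax⟩ := Option.ne_none_iff_exists'.1 hb
    have hi₀mem : i₀ ∈ supp σ := Finset.mem_of_max hmax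
    obtain ⟨v, hv⟩ := Option.isSome_iff_exists.1 (mem_supp.1 hi₀mem)
    have hcard : (supp (Function.update σ i₀ none)).card < (supp σ).card := by
      rw [supp_del, Finset.card_erase_of_mem hi₀mem]
      have : 0 < (supp σ).card := Finset.card_pos.2 ⟨i₀, hi₀mem⟩
      omega
    rw [PF_eq u Dec₁ σ hmax hv m, PF_eq u Dec₂ σ hmax hv m]
    congr 1
    · rw [h _ _ hcard]
    · refine Finset.sum_congr rfl fun c _ => ?_
      cases hτc : Function.update σ i₀ none c with
      | none => rw [show uval u (Function.update σ i₀ none) c = 0 by rw [uval, hτc]; rfl]; simp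
      | some w =>
        have : (supp (Function.update (Function.update σ i₀ none) c (some v))).card
            < (supp σ).card := by
          rwa [supp_upd_some, Finset.insert_eq_self.2 (mem_supp.2 (by rw [hτc]; rfl))]
        rw [h _ _ this]

/-- The core membership: the tower equation at the next level, up to `Phi`. -/
lemma core (hW : ∀ i, x i = ∑ j, u j * W j i)
    (hT : ∀ f g : Fin n → M, (∑ i, x i • f i) = ∑ i, x i • g i → ∀ i, f i - g i ∈ Phi x)
    {Dec : (Fin n → Option (Fin n)) → M → Fin n → M} {p : ℕ} (hSpec : Spec x u W Dec p)
    (σ : Fin n → Option (Fin n)) (m : M) (hInj : Inj σ) (hcard : (supp σ).card = p + 1) :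
    dd W σ • m - PF u Dec σ m ∈ Phi x := by
  classical
  obtain ⟨hSP, hS2⟩ := hSpec
  have hne : (supp σ).Nonempty := Finset.card_pos.1 (by omega)
  obtain ⟨i₀, hmax⟩ := Finset.max_of_nonempty hne
  have hi₀mem : i₀ ∈ supp σ := Finset.mem_of_max hmax
  obtain ⟨v, hv⟩ := Option.isSome_iff_exists.1 (mem_supp.1 hi₀mem)
  set τ := Function.update σ i₀ none with hτdef
  have hτInj : Inj τ := Inj_del hInj i₀
  have hcardτ : (supp τ).card ≤ p := by
    rw [hτdef, supp_del, Finset.card_erase_of_mem hi₀mem]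
    omega
  have hfτv : Fresh τ v := fresh_del hInj hv
  have hτi₀ : τ i₀ = none := Function.update_self _ _ _
  have hσeq : Function.update τ i₀ (some v) = σ := by
    rw [hτdef, Function.update_idem, ← hv]
    exact Function.update_eq_self _ _
  -- the Cramer identity, smul'd on m
  have hkey := congrArg (· • m) (key W x u hW τ v)
  simp only [Finset.sum_smul] at hkey
  -- rewrite each term
  have hterm : ∀ i, (dd W (Function.update τ i (some v)) * yv x u τ i) • m
      = x i • ((τ i).elim (dd W (Function.update τ i (some v)) • m) (fun _ => (0 : M)))
        + uval u τ i • (dd W (Function.update τ i (some v)) • m) := by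
    intro i
    cases hτi : τ i with
    | none =>
      rw [show yv x u τ i = x i by rw [yv, hτi]; rfl,
          show uval u τ i = 0 by rw [uval, hτi]; rfl]
      simp only [Option.elim, zero_smul, add_zero]
      rw [mul_comm, mul_smul]
    | some w =>
      rw [show yv x u τ i = u w by rw [yv, hτi]; rfl,
          show uval u τ i = u w by rw [uval, hτi]; rfl]
      simp only [Option.elim, smul_zero, zero_add]
      rw [mul_comm, mul_smul]
  rw [Finset.sum_congr rfl fun i _ => hterm i, Finset.sum_add_distrib] at hkey
  -- substitute the spec for the lower-level determinants
  have hsub : ∑ i, uval u τ i • (dd W (Function.update τ i (some v)) • m)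
      = ∑ i, uval u τ i • (PF u Dec (Function.update τ i (some v)) m
          + ∑ l, x l • Dec (Function.update τ i (some v)) m l) := by
    refine Finset.sum_congr rfl fun i _ => ?_
    cases hτi : τ i with
    | none => rw [show uval u τ i = 0 by rw [uval, hτi]; rfl]; simp
    | some w =>
      congr 1
      refine hSP _ m (Inj_upd_of_fresh hτInj hfτv i) ?_
      rw [supp_upd_some, Finset.insert_eq_self.2 (mem_supp.2 (by rw [hτi]; rfl))]
      exact hcardτ
  have hτ_eq : (dd W τ * u v) • m = u v • (dd W τ • m) := by
    rw [mul_comm, mul_smul]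
  rw [hsub, hτ_eq, hSP τ m hτInj hcardτ] at hkey
  -- use the cancellation identity
  have hCC := CC u Dec hS2 τ m v hτInj (by omega) hfτv
  -- rearrange hkey into the form Σ x i • F i = Σ x i • Z i
  have hkey2 : ∑ i, x i • ((τ i).elim (dd W (Function.update τ i (some v)) • m) (fun _ => (0 : M)))
      = ∑ l, x l • (u v • Dec τ m l - ∑ i, uval u τ i • Dec (Function.update τ i (some v)) m l) := by
    have e1 : ∑ i, uval u τ i • (PF u Dec (Function.update τ i (some v)) m
          + ∑ l, x l • Dec (Function.update τ i (some v)) m l)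
        = (∑ i, uval u τ i • PF u Dec (Function.update τ i (some v)) m)
          + ∑ i, uval u τ i • ∑ l, x l • Dec (Function.update τ i (some v)) m l := by
      rw [← Finset.sum_add_distrib]
      exact Finset.sum_congr rfl fun i _ => smul_add _ _ _
    rw [e1] at hkey
    have e2 : u v • (PF u Dec τ m + ∑ l, x l • Dec τ m l)
        = u v • PF u Dec τ m + u v • ∑ l, x l • Dec τ m l := smul_add _ _ _
    rw [e2] at hkey
    -- cancel the PF sums via hCC
    have e3 : ∑ i, x i • ((τ i).elim (dd W (Function.update τ i (some v)) • m) (fun _ => (0 : M)))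
        = u v • ∑ l, x l • Dec τ m l
          - ∑ i, uval u τ i • ∑ l, x l • Dec (Function.update τ i (some v)) m l := by
      rw [hCC] at hkey
      have h' : (∑ i, uval u τ i • PF u Dec (Function.update τ i (some v)) m)
          + (∑ i, x i • ((τ i).elim (dd W (Function.update τ i (some v)) • m) (fun _ => (0 : M)))
            + ∑ i, uval u τ i • ∑ l, x l • Dec (Function.update τ i (some v)) m l)
          = (∑ i, uval u τ i • PF u Dec (Function.update τ i (some v)) m)
            + u v • ∑ l, x l • Dec τ m l := by
        rw [← hkey]; abel
      exact eq_sub_of_add_eq (add_left_cancel h')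
    rw [e3]
    have e4 : u v • ∑ l, x l • Dec τ m l = ∑ l, x l • (u v • Dec τ m l) := by
      rw [Finset.smul_sum]
      exact Finset.sum_congr rfl fun l _ => smul_comm _ _ _
    have e5 : ∑ i, uval u τ i • ∑ l, x l • Dec (Function.update τ i (some v)) m l
        = ∑ l, x l • ∑ i, uval u τ i • Dec (Function.update τ i (some v)) m l := by
      calc ∑ i, uval u τ i • ∑ l, x l • Dec (Function.update τ i (some v)) m l
          = ∑ i, ∑ l, x l • (uval u τ i • Dec (Function.update τ i (some v)) m l) := by
            refine Finset.sum_congr rfl fun i _ => ?_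
            rw [Finset.smul_sum]
            exact Finset.sum_congr rfl fun l _ => smul_comm _ _ _
        _ = ∑ l, ∑ i, x l • (uval u τ i • Dec (Function.update τ i (some v)) m l) :=
            Finset.sum_comm
        _ = ∑ l, x l • ∑ i, uval u τ i • Dec (Function.update τ i (some v)) m l := by
            refine Finset.sum_congr rfl fun l _ => ?_
            rw [Finset.smul_sum]
    rw [e4, e5, ← Finset.sum_sub_distrib]
    exact Finset.sum_congr rfl fun l _ => by rw [smul_sub]
  have hmem := hT _ _ hkey2 i₀
  rw [hτi₀] at hmem
  simp only [Option.elim] at hmem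
  rw [hσeq] at hmem
  have hPFσ : PF u Dec σ m = u v • Dec τ m i₀
      - ∑ i, uval u τ i • Dec (Function.update τ i (some v)) m i₀ := by
    have hdel : Function.update σ i₀ none = τ := by rw [hτdef]
    rw [PF_eq u Dec σ hmax hv m, hdel]
  rw [hPFσ]
  exact hmem


lemma Inj_swap {σ : Fin n → Option (Fin n)} (hInj : Inj σ) {c₁ c₂ v₁ v₂ : Fin n}
    (hne : c₁ ≠ c₂) (h₁ : σ c₁ = some v₁) (h₂ : σ c₂ = some v₂) :
    Inj (Function.update (Function.update σ c₁ (some v₂)) c₂ (some v₁)) := by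
  intro r r' z hr hr'
  rw [swap_apply] at hr hr'
  by_cases a1 : r = c₂
  · rw [if_pos a1] at hr
    by_cases b1 : r' = c₂
    · rw [a1, b1]
    · rw [if_neg b1] at hr'
      by_cases b2 : r' = c₁
      · rw [if_pos b2] at hr'
        cases hr; cases hr'
        exact absurd (hInj h₁ h₂) hne
      · rw [if_neg b2] at hr'
        cases hr
        exact absurd (hInj hr' h₁) b2
  · rw [if_neg a1] at hr
    by_cases a2 : r = c₁
    · rw [if_pos a2] at hr
      by_cases b1 : r' = c₂
      · rw [if_pos b1] at hr'
        cases hr; cases hr'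
        exact absurd (hInj h₂ h₁) (Ne.symm hne)
      · rw [if_neg b1] at hr'
        by_cases b2 : r' = c₁
        · rw [a2, b2]
        · rw [if_neg b2] at hr'
          cases hr
          exact absurd (hInj hr' h₂) b1
    · rw [if_neg a2] at hr
      by_cases b1 : r' = c₂
      · rw [if_pos b1] at hr'
        cases hr'
        exact absurd (hInj hr h₁) a2
      · rw [if_neg b1] at hr'
        by_cases b2 : r' = c₁
        · rw [if_pos b2] at hr'
          cases hr'
          exact absurd (hInj hr h₂) a1
        · rw [if_neg b2] at hr'
          exact hInj hr hr'

/-- The main tower construction. -/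
lemma tower (hW : ∀ i, x i = ∑ j, u j * W j i)
    (hT : ∀ f g : Fin n → M, (∑ i, x i • f i) = ∑ i, x i • g i → ∀ i, f i - g i ∈ Phi x)
    (a : Fin n → A) (hDdec : W.det = ∑ l, a l * x l) :
    ∀ p, ∃ Dec : (Fin n → Option (Fin n)) → M → Fin n → M, Spec x u W Dec p := by
  intro p
  induction p with
  | zero =>
    refine ⟨fun _ m l => a l • m, ?_, ?_⟩
    · intro σ m hInj hcard
      have hsupp : supp σ = ∅ := Finset.card_eq_zero.1 (le_antisymm hcard (Nat.zero_le _))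
      have hmaxb : (supp σ).max = ⊥ := by rw [hsupp]; exact Finset.max_empty
      rw [PF_bot u _ σ hmaxb m]
      have hσ : ∀ c, σ c = none := by
        intro c
        by_contra h
        have : c ∈ supp σ := mem_supp.2 (Option.ne_none_iff_isSome.1 h)
        rw [hsupp] at this
        exact absurd this (Finset.notMem_empty c)
      have hBB : BB W σ = Wᵀ := by
        ext i j
        rw [BB, Matrix.of_apply, hσ i]
        rfl
      have hdd : dd W σ = W.det := by rw [dd, hBB, Matrix.det_transpose]
      rw [hdd, zero_add, hDdec, Finset.sum_smul]
      exact Finset.sum_congr rfl fun l _ => by rw [mul_comm, mul_smul]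
    · intro σ₀ m c c' w w' hInj hcard hne h1 h2
      exfalso
      have hmem : c ∈ supp σ₀ := mem_supp.2 (by rw [h1]; rfl)
      have h0 : supp σ₀ = ∅ := Finset.card_eq_zero.1 (le_antisymm hcard (Nat.zero_le _))
      rw [h0] at hmem
      exact Finset.notMem_empty c hmem
  | succ p ih =>
    obtain ⟨Dec, hSP, hS2⟩ := ih
    classical
    set newDec : (Fin n → Option (Fin n)) → M → Fin n → M := fun σ m =>
      if (supp σ).card = p + 1 then
        (fun l => (sg σ : A) • chooseDec x ((sg σ : A) • (dd W σ • m - PF u Dec σ m)) l)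
      else Dec σ m with hnewDef
    have hagree : ∀ (σ' : Fin n → Option (Fin n)) (m' : M), (supp σ').card ≤ p →
        newDec σ' m' = Dec σ' m' := by
      intro σ' m' h
      rw [hnewDef]
      simp only
      rw [if_neg (by omega)]
    have hPFeq : ∀ σ (m : M), (supp σ).card ≤ p + 1 → PF u newDec σ m = PF u Dec σ m := by
      intro σ m h
      refine PF_congr u newDec Dec σ m ?_
      intro σ' m' hlt
      exact hagree σ' m' (by omega)
    refine ⟨newDec, ?_, ?_⟩
    · intro σ m hInj hcard
      rcases Nat.lt_or_ge (supp σ).card (p + 1) with hlt | hge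
      · rw [hPFeq σ m (by omega), hagree σ m (by omega)]
        exact hSP σ m hInj (by omega)
      · have hcard' : (supp σ).card = p + 1 := le_antisymm hcard hge
        have hmem : dd W σ • m - PF u Dec σ m ∈ Phi x :=
          core x u W hW hT ⟨hSP, hS2⟩ σ m hInj hcard'
        have hmem' : (sg σ : A) • (dd W σ • m - PF u Dec σ m) ∈ Phi x :=
          Submodule.smul_mem _ _ hmem
        have hdec := chooseDec_spec x _ (decPhi x _ hmem')
        rw [hPFeq σ m hcard]
        have hnew : newDec σ m
            = fun l => (sg σ : A) • chooseDec x ((sg σ : A) • (dd W σ • m - PF u Dec σ m)) l := by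
          rw [hnewDef]
          simp only
          rw [if_pos hcard']
        rw [hnew]
        have hsum : ∑ l, x l • ((sg σ : A) • chooseDec x ((sg σ : A) • (dd W σ • m - PF u Dec σ m)) l)
            = (sg σ : A) • ∑ l, x l • chooseDec x ((sg σ : A) • (dd W σ • m - PF u Dec σ m)) l := by
          rw [Finset.smul_sum]
          exact Finset.sum_congr rfl fun l _ => smul_comm _ _ _
        rw [hsum, ← hdec, smul_smul, sg_mul_self hInj, one_smul]
        abel
    · intro σ₀ m c c' w w' hInj hcard hne h1 h2
      rcases Nat.lt_or_ge (supp σ₀).card (p + 1) with hlt | hge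
      · rw [hagree _ m (by rw [supp_swap σ₀ h1 h2]; omega), hagree σ₀ m (by omega)]
        exact hS2 σ₀ m hInj (by omega) hne h1 h2
      · have hcard' : (supp σ₀).card = p + 1 := le_antisymm hcard hge
        have hswapcard : (supp (Function.update (Function.update σ₀ c (some w')) c' (some w))).card
            = p + 1 := by rw [supp_swap σ₀ h1 h2]; exact hcard'
        have hsgswap := sg_swap (A := A) σ₀ hne h1 h2
        have hdswap := dd_swap W σ₀ hne h1 h2
        have hPFswap := PF_swap u Dec hS2 σ₀ m hInj hcard hne h1 h2
        have hnew1 : newDec (Function.update (Function.update σ₀ c (some w')) c' (some w)) m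
            = fun l => (sg (Function.update (Function.update σ₀ c (some w')) c' (some w)) : A) •
                chooseDec x ((sg (Function.update (Function.update σ₀ c (some w')) c' (some w)) : A) •
                  (dd W (Function.update (Function.update σ₀ c (some w')) c' (some w)) • m
                    - PF u Dec (Function.update (Function.update σ₀ c (some w')) c' (some w)) m)) l := by
          rw [hnewDef]
          simp only
          rw [if_pos hswapcard]
        have hnew2 : newDec σ₀ m
            = fun l => (sg σ₀ : A) • chooseDec x ((sg σ₀ : A) • (dd W σ₀ • m - PF u Dec σ₀ m)) l := by
          rw [hnewDef]
          simp only
          rw [if_pos hcard']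
        rw [hnew1, hnew2]
        have harg : (sg (Function.update (Function.update σ₀ c (some w')) c' (some w)) : A) •
              (dd W (Function.update (Function.update σ₀ c (some w')) c' (some w)) • m
                - PF u Dec (Function.update (Function.update σ₀ c (some w')) c' (some w)) m)
            = (sg σ₀ : A) • (dd W σ₀ • m - PF u Dec σ₀ m) := by
          rw [hsgswap, hdswap, hPFswap]
          rw [show ((-(dd W σ₀)) • m - -PF u Dec σ₀ m) = -(dd W σ₀ • m - PF u Dec σ₀ m) by
            rw [neg_smul]; abel]
          rw [neg_smul, smul_neg, neg_neg]
        rw [harg, hsgswap]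
        funext l
        rw [neg_smul]
        simp


lemma PF_mem_Ju (Dec : (Fin n → Option (Fin n)) → M → Fin n → M)
    (σ : Fin n → Option (Fin n)) (m : M) :
    PF u Dec σ m ∈ Ideal.span (Set.range u) • (⊤ : Submodule A M) := by
  classical
  by_cases hb : (supp σ).max = ⊥
  · rw [PF_bot u Dec σ hb m]
    exact Submodule.zero_mem _
  · obtain ⟨i₀, hmax⟩ := Option.ne_none_iff_exists'.1 hb
    have hi₀mem : i₀ ∈ supp σ := Finset.mem_of_max hmax
    obtain ⟨v, hv⟩ := Option.isSome_iff_exists.1 (mem_supp.1 hi₀mem)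
    rw [PF_eq u Dec σ hmax hv m]
    refine Submodule.sub_mem _ ?_ ?_
    · exact Submodule.smul_mem_smul (Ideal.subset_span ⟨v, rfl⟩) Submodule.mem_top
    · refine Submodule.sum_mem _ fun c _ => ?_
      cases hτc : Function.update σ i₀ none c with
      | none =>
        rw [show uval u (Function.update σ i₀ none) c = 0 by rw [uval, hτc]; rfl, zero_smul]
        exact Submodule.zero_mem _
      | some w =>
        rw [show uval u (Function.update σ i₀ none) c = u w by rw [uval, hτc]; rfl]
        exact Submodule.smul_mem_smul (Ideal.subset_span ⟨w, rfl⟩) Submodule.mem_top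

end Main







end LechTower


/-- If `M` is a nonzero finitely generated module, `x` is `M`-independent, `x = uW` with
`Jₓ ⊆ Jᵤ` contained in the Jacobson radical, then `det W ∉ Jₓ`. -/
theorem det_not_mem_of_independent
    {A : Type} [CommRing A] {M : Type} [AddCommGroup M] [Module A M]
    [Module.Finite A M] [Nontrivial M]
    {n : ℕ} (x u : Fin n → A) (W : Matrix (Fin n) (Fin n) A)
    (hW : ∀ i, x i = ∑ j, u j * W j i)
    (hsub : Ideal.span (Set.range x) ≤ Ideal.span (Set.range u))
    (hjac : Ideal.span (Set.range u) ≤ (⊥ : Ideal A).jacobson)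
    (hind : ∀ m : Fin n → M, (∑ i, x i • m i) = 0 →
      ∀ i, m i ∈ Ideal.span (Set.range x) • (⊤ : Submodule A M)) :
    W.det ∉ Ideal.span (Set.range x) := by
  intro hD
  obtain ⟨m₁, m₂, hm12⟩ := exists_pair_ne M
  rcases Nat.eq_zero_or_pos n with hn0 | hn
  · -- n = 0 : the determinant is 1 and the span is ⊥, so A is trivial, hence M is, contradiction
    subst hn0
    have hr : Set.range x = ∅ := Set.range_eq_empty x
    rw [hr, Ideal.span_empty] at hD
    have hdet : W.det = 1 := by
      rw [show W = 1 from Subsingleton.elim _ _, Matrix.det_one]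
    rw [hdet, Ideal.mem_bot] at hD
    apply hm12
    calc m₁ = (1 : A) • m₁ := (one_smul _ _).symm
      _ = (0 : A) • m₁ := by rw [hD]
      _ = 0 := zero_smul _ _
      _ = (0 : A) • m₂ := (zero_smul _ _).symm
      _ = (1 : A) • m₂ := by rw [hD]
      _ = m₂ := one_smul _ _
  · obtain ⟨a, ha⟩ := (Submodule.mem_span_range_iff_exists_fun A).1 hD
    have hDdec : W.det = ∑ l, a l * x l := by
      rw [← ha]
      exact Finset.sum_congr rfl fun l _ => (smul_eq_mul (a l) (x l)).symm ▸ rfl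
    have hT : ∀ f g : Fin n → M, (∑ i, x i • f i) = ∑ i, x i • g i →
        ∀ i, f i - g i ∈ LechTower.Phi x := by
      intro f g hfg i
      have h0 : ∑ i, x i • (f - g) i = 0 := by
        have : ∀ i, x i • (f - g) i = x i • f i - x i • g i := fun i => by
          rw [Pi.sub_apply, smul_sub]
        rw [Finset.sum_congr rfl fun i _ => this i, Finset.sum_sub_distrib, hfg, sub_self]
      exact hind (f - g) h0 i
    obtain ⟨Dec, hSpec⟩ := LechTower.tower x u W hW hT a hDdec (n - 1)
    -- the full assignment
    have hInjf : LechTower.Inj (fun i : Fin n => some i) := by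
      intro c c' v h1 h2
      cases h1; cases h2; rfl
    have hsuppf : LechTower.supp (fun i : Fin n => some i) = Finset.univ := by
      ext c
      simp [LechTower.mem_supp]
    have hcardf : (LechTower.supp (fun i : Fin n => some i)).card = (n - 1) + 1 := by
      rw [hsuppf, Finset.card_univ, Fintype.card_fin]
      omega
    have hddf : LechTower.dd W (fun i : Fin n => some i) = 1 := by
      rw [LechTower.dd]
      have hBB : LechTower.BB W (fun i : Fin n => some i) = 1 := by
        ext i j
        rw [LechTower.BB, Matrix.of_apply]
        show (Pi.single i 1 : Fin n → A) j = (1 : Matrix (Fin n) (Fin n) A) i j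
        rw [Pi.single_apply, Matrix.one_apply]
        by_cases h : i = j
        · simp [h]
        · simp [h, Ne.symm h]
      rw [hBB, Matrix.det_one]
    -- every element lies in Jᵤ • ⊤
    have htop : (⊤ : Submodule A M) ≤ Ideal.span (Set.range u) • (⊤ : Submodule A M) := by
      intro m _
      have hcore := LechTower.core x u W hW hT hSpec (fun i : Fin n => some i) m hInjf hcardf
      rw [hddf, one_smul] at hcore
      have hsub' : LechTower.Phi x (M := M) ≤ Ideal.span (Set.range u) • (⊤ : Submodule A M) :=
        Submodule.smul_mono_left hsub
      have h1 : m - LechTower.PF u Dec (fun i : Fin n => some i) m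
          ∈ Ideal.span (Set.range u) • (⊤ : Submodule A M) := hsub' hcore
      have h2 := LechTower.PF_mem_Ju u Dec (fun i : Fin n => some i) m
      have := Submodule.add_mem _ h1 h2
      rwa [sub_add_cancel] at this
    have hbot : (⊤ : Submodule A M) = ⊥ :=
      Submodule.eq_bot_of_le_smul_of_le_jacobson_bot _ ⊤ Module.Finite.fg_top htop hjac
    apply hm12
    have e1 : m₁ ∈ (⊥ : Submodule A M) := hbot ▸ Submodule.mem_top
    have e2 : m₂ ∈ (⊥ : Submodule A M) := hbot ▸ Submodule.mem_top
    rw [Submodule.mem_bot] at e1 e2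
    rw [e1, e2]
end

section
/- Let A be a ring and x = (x_1,...,x_n) a sequence generating an ideal J_x. Suppose there exists an A-module M such that x is M-independent and Ann_A(M/J_x M) = J_x. Then x is A-independent, i.e., every relation Σ x_i b_i = 0 with b_i ∈ A forces b_i ∈ J_x. -/
/-- If there exists an `A`-module `M` such that `x` is `M`-independent and the annihilator
of `M/JₓM` equals `Jₓ`, then `x` is `A`-independent. -/
theorem A_independent_of_faithful
    {A : Type} [CommRing A] {M : Type} [AddCommGroup M] [Module A M]
    {n : ℕ} (x : Fin n → A)
    (hind : ∀ m : Fin n → M, (∑ i, x i • m i) = 0 →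
      ∀ i, m i ∈ Ideal.span (Set.range x) • (⊤ : Submodule A M))
    (hann : Module.annihilator A
        (M ⧸ (Ideal.span (Set.range x) • ⊤ : Submodule A M)) =
      Ideal.span (Set.range x)) :
    ∀ b : Fin n → A, (∑ i, x i * b i) = 0 →
      ∀ i, b i ∈ Ideal.span (Set.range x) := by
  intro b hb i
  rw [← hann, Module.mem_annihilator]
  intro mq
  obtain ⟨m, rfl⟩ := Submodule.Quotient.mk_surjective _ mq
  have key : (∑ j, x j • (b j • m)) = 0 := by
    simp_rw [smul_smul]
    rw [← Finset.sum_smul, hb, zero_smul]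
  have := hind (fun j => b j • m) key i
  rwa [← Submodule.Quotient.mk_smul, Submodule.Quotient.mk_eq_zero]
end

section
/- Let φ : A → B be a local morphism of Noetherian local rings and M a nonzero B-module finitely generated over A. Then dim_k Tor_1^A(M,k) ≥ (edim(A) − μ_B(m_A B)) · dim_k Tor_0^A(M,k), where k is the residue field of A. -/
open IsLocalRing CategoryTheory

/-- The embedding dimension of a local ring: the minimal number of generators of its
maximal ideal. -/
noncomputable def edim (A : Type) [CommRing A] [IsLocalRing A] : ℕ :=
  sInf {k : ℕ | ∃ y : Fin k → A, Ideal.span (Set.range y) = maximalIdeal A}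

/-- The minimal number of generators of an ideal `J` of `B`. -/
noncomputable def mu (B : Type) [CommRing B] (J : Ideal B) : ℕ :=
  sInf {k : ℕ | ∃ y : Fin k → B, Ideal.span (Set.range y) = J}

/-- `Tor₁^A(M, k)`, where `k` is the residue field of the local ring `A`. -/
noncomputable def torOne (A : Type) [CommRing A] [IsLocalRing A]
    (M : Type) [AddCommGroup M] [Module A M] : ModuleCat A :=
  ((Tor (ModuleCat A) 1).obj (ModuleCat.of A M)).obj
    (ModuleCat.of A (A ⧸ maximalIdeal A))


open CategoryTheory.Limits CategoryTheory.Projective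
open scoped TensorProduct

noncomputable section

section Helpers
variable {R : Type*} [CommRing R] {I : Ideal R}
variable {N P : Type*} [AddCommGroup N] [Module R N] [AddCommGroup P] [Module R P]
variable [Module (R ⧸ I) N] [Module (R ⧸ I) P]

theorem compat_smul_assoc (h : ∀ (a : R) (x : N), Ideal.Quotient.mk I a • x = a • x)
    (a : R) (c : R ⧸ I) (x : N) : (a • c) • x = a • (c • x) := by
  obtain ⟨b, rfl⟩ := Ideal.Quotient.mk_surjective c
  have : a • (Ideal.Quotient.mk I b) = Ideal.Quotient.mk I (a * b) := by
    rw [← Ideal.Quotient.mk_eq_mk, ← Ideal.Quotient.mk_eq_mk, ← Submodule.Quotient.mk_smul]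
    rfl
  rw [this, h, h, mul_smul]

theorem compat_tower (h : ∀ (a : R) (x : N), Ideal.Quotient.mk I a • x = a • x) :
    IsScalarTower R (R ⧸ I) N :=
  ⟨fun a c x => compat_smul_assoc h a c x⟩

def compat_linearMap (hN : ∀ (a : R) (x : N), Ideal.Quotient.mk I a • x = a • x)
    (hP : ∀ (a : R) (x : P), Ideal.Quotient.mk I a • x = a • x)
    (f : N →ₗ[R] P) : N →ₗ[R ⧸ I] P where
  toFun := f
  map_add' := f.map_add
  map_smul' c x := by
    obtain ⟨b, rfl⟩ := Ideal.Quotient.mk_surjective c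
    simp only [RingHom.id_apply, hN, hP, map_smul]

theorem compat_finite (hN : ∀ (a : R) (x : N), Ideal.Quotient.mk I a • x = a • x)
    [Module.Finite R N] : Module.Finite (R ⧸ I) N := by
  haveI := compat_tower hN
  exact Module.Finite.of_restrictScalars_finite R (R ⧸ I) N

theorem compat_span_top (hN : ∀ (a : R) (x : N), Ideal.Quotient.mk I a • x = a • x)
    {s : Set N} (hs : Submodule.span R s = ⊤) : Submodule.span (R ⧸ I) s = ⊤ := by
  haveI := compat_tower hN
  rw [eq_top_iff]
  intro x _
  have hx : x ∈ Submodule.span R s := hs ▸ Submodule.mem_top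
  have : Submodule.span R s ≤ (Submodule.span (R ⧸ I) s).restrictScalars R :=
    Submodule.span_le.2 Submodule.subset_span
  exact this hx

end Helpers

section BSide

variable {A B : Type} [CommRing A] [IsLocalRing A]
  [CommRing B] [IsLocalRing B] [IsNoetherianRing B] [Algebra A B]

set_option maxHeartbeats 1000000 in
theorem exists_w :
    ∃ (s : ℕ) (w : Fin s → A), s ≤ mu B (Ideal.map (algebraMap A B) (maximalIdeal A)) ∧
      (∀ j, w j ∈ maximalIdeal A) ∧
      (Ideal.map (algebraMap A B) (maximalIdeal A) : Ideal B) ≤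
        Ideal.span (Set.range fun j => algebraMap A B (w j)) := by
  classical
  letI : Field (B ⧸ maximalIdeal B) := Ideal.Quotient.field _
  set φ := algebraMap A B with hφ
  set I := maximalIdeal A with hI
  set J : Ideal B := Ideal.map φ I with hJdef
  have hJfg : J.FG := IsNoetherian.noetherian J
  have hne : (mu B J) ∈ {k : ℕ | ∃ y : Fin k → B, Ideal.span (Set.range y) = J} := by
    apply Nat.sInf_mem
    obtain ⟨n, yy, hyy⟩ := Submodule.fg_iff_exists_fin_generating_family.mp hJfg
    exact ⟨n, yy, hyy⟩
  obtain ⟨y, hy⟩ := hne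
  set U := ↥J ⧸ (maximalIdeal B • ⊤ : Submodule B ↥J) with hU
  have tor : Module.IsTorsionBySet B U ↑(maximalIdeal B) := by
    intro x a
    obtain ⟨z, rfl⟩ := Submodule.Quotient.mk_surjective _ x
    rw [← Submodule.Quotient.mk_smul]
    exact (Submodule.Quotient.mk_eq_zero _).2 (Submodule.smul_mem_smul a.2 trivial)
  letI : Module (B ⧸ maximalIdeal B) U := tor.module
  have compatU : ∀ (a : B) (x : U), Ideal.Quotient.mk (maximalIdeal B) a • x = a • x := tor.mk_smul
  set q : ↥J →ₗ[B] U := Submodule.mkQ _ with hq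
  set SJ : Set ↥J := Subtype.val ⁻¹' (⇑φ '' (I : Set A)) with hSJ
  have hsubJ : ⇑φ '' (I : Set A) ⊆ Set.range (Subtype.val : ↥J → B) := by
    rw [Subtype.range_val]
    rintro - ⟨v, hv, rfl⟩
    exact Ideal.mem_map_of_mem φ hv
  have hSJcoe : (⇑(Submodule.subtype J)) '' SJ = ⇑φ '' (I : Set A) := by
    show Subtype.val '' SJ = _
    rw [hSJ]
    exact Set.image_preimage_eq_of_subset hsubJ
  have hJspan : Ideal.span (⇑φ '' (I : Set A)) = J := rfl
  have hSJspan : Submodule.span B SJ = ⊤ := by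
    apply Submodule.map_injective_of_injective (Submodule.injective_subtype J)
    rw [Submodule.map_span, hSJcoe, Submodule.map_top, Submodule.range_subtype]
    exact hJspan
  have hgspanB : Submodule.span B (⇑q '' SJ) = ⊤ := by
    rw [← Submodule.map_span, hSJspan, Submodule.map_top, hq, Submodule.range_mkQ]
  have hgspan : Submodule.span (B ⧸ maximalIdeal B) (⇑q '' SJ) = ⊤ :=
    compat_span_top compatU hgspanB
  haveI : Module.Finite B ↥J := (Module.Finite.iff_fg (N := J)).mpr hJfg
  haveI : Module.Finite B U := Module.Finite.of_surjective q (Submodule.mkQ_surjective _)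
  haveI : FiniteDimensional (B ⧸ maximalIdeal B) U := compat_finite compatU
  set bset := (linearIndepOn_empty (B ⧸ maximalIdeal B) (id : U → U)).extend
    (Set.empty_subset (⇑q '' SJ)) with hbset
  have hsub : bset ⊆ ⇑q '' SJ :=
    (linearIndepOn_empty (B ⧸ maximalIdeal B) (id : U → U)).extend_subset _
  have hli := (linearIndepOn_empty (B ⧸ maximalIdeal B) (id : U → U)).linearIndepOn_extend
    (Set.empty_subset (⇑q '' SJ))
  have hsp : Submodule.span (B ⧸ maximalIdeal B) bset = ⊤ := by
    have h1 : ⇑q '' SJ ⊆ ↑(Submodule.span (B ⧸ maximalIdeal B) bset) :=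
      (linearIndepOn_empty (B ⧸ maximalIdeal B) (id : U → U)).subset_span_extend
        (Set.empty_subset (⇑q '' SJ))
    rw [eq_top_iff, ← hgspan]
    exact Submodule.span_le.mpr h1
  set Bas : Module.Basis ↥bset (B ⧸ maximalIdeal B) U := Module.Basis.mk (v := ((↑) : ↥bset → U)) hli (by rw [Subtype.range_coe, hsp])
  haveI : Fintype ↥bset := FiniteDimensional.fintypeBasisIndex Bas
  have hcard : Fintype.card ↥bset = Module.finrank (B ⧸ maximalIdeal B) U :=
    (Module.finrank_eq_card_basis Bas).symm
  have hyJ : ∀ j, y j ∈ J := fun j => hy ▸ Ideal.subset_span (Set.mem_range_self j)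
  set y' : Fin (mu B J) → U := fun j => q ⟨y j, hyJ j⟩ with hy'
  have hy'spanB : Submodule.span B (Set.range y') = ⊤ := by
    have h0 : Submodule.span B (Set.range fun j => (⟨y j, hyJ j⟩ : ↥J)) = ⊤ := by
      apply Submodule.map_injective_of_injective (Submodule.injective_subtype J)
      rw [Submodule.map_span, Submodule.map_top, Submodule.range_subtype]
      have h2 : (⇑(Submodule.subtype J)) '' (Set.range fun j => (⟨y j, hyJ j⟩ : ↥J))
          = Set.range y := by
        ext b; constructor
        · rintro ⟨z, ⟨j, rfl⟩, rfl⟩; exact ⟨j, rfl⟩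
        · rintro ⟨j, rfl⟩; exact ⟨⟨y j, hyJ j⟩, ⟨j, rfl⟩, rfl⟩
      rw [h2]; exact hy
    have h3 : Set.range y' = ⇑q '' (Set.range fun j => (⟨y j, hyJ j⟩ : ↥J)) := by
      rw [← Set.range_comp]; rfl
    rw [h3, ← Submodule.map_span, h0, Submodule.map_top, hq, Submodule.range_mkQ]
  have hy'span : Submodule.span (B ⧸ maximalIdeal B) (Set.range y') = ⊤ :=
    compat_span_top compatU hy'spanB
  have hfrU : Module.finrank (B ⧸ maximalIdeal B) U ≤ mu B J := by
    have h1 := finrank_span_le_card (R := B ⧸ maximalIdeal B) (Set.range y')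
    rw [hy'span, finrank_top] at h1
    refine h1.trans ?_
    rw [Set.toFinset_card]
    simpa using Fintype.card_range_le y'
  have hchoice : ∀ z : ↥bset, ∃ v : A, ∃ hv : v ∈ I,
      q ⟨φ v, Ideal.mem_map_of_mem φ hv⟩ = (z : U) := by
    intro z
    obtain ⟨zz, hzz, hzq⟩ := hsub z.2
    obtain ⟨v, hv, hφv⟩ := hzz
    exact ⟨v, hv, by rwa [show (⟨φ v, Ideal.mem_map_of_mem φ hv⟩ : ↥J) = zz from Subtype.ext hφv]⟩
  choose wv hwvI hwvq using hchoice
  set s := Fintype.card ↥bset with hs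
  set eb : Fin s ≃ ↥bset := (Fintype.equivFin ↥bset).symm with heb
  refine ⟨s, fun i => wv (eb i), hcard ▸ hfrU, fun i => hwvI _, ?_⟩
  set N : Ideal B := Ideal.span (Set.range fun j => φ (wv (eb j))) with hN
  have hjac : maximalIdeal B ≤ (⊥ : Ideal B).jacobson :=
    (IsLocalRing.jacobson_eq_maximalIdeal (⊥ : Ideal B) bot_ne_top).ge
  refine Submodule.le_of_le_smul_of_le_jacobson_bot hJfg hjac ?_
  intro b hb
  have hmem : q ⟨b, hb⟩ ∈ Submodule.span (B ⧸ maximalIdeal B)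
      (Set.range fun i => q ⟨φ (wv (eb i)), Ideal.mem_map_of_mem φ (hwvI (eb i))⟩) := by
    have h4 : (Set.range fun i => q ⟨φ (wv (eb i)), Ideal.mem_map_of_mem φ (hwvI (eb i))⟩)
        = bset := by
      ext u; constructor
      · rintro ⟨i, rfl⟩; beta_reduce; rw [hwvq]; exact (eb i).2
      · intro hu
        refine ⟨eb.symm ⟨u, hu⟩, ?_⟩
        beta_reduce; rw [hwvq]; simp
    rw [h4, hsp]; trivial
  rw [Submodule.mem_span_range_iff_exists_fun] at hmem
  obtain ⟨c, hc⟩ := hmem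
  choose cr hcr using fun i => Ideal.Quotient.mk_surjective (c i)
  have hcomb : q ((⟨b, hb⟩ : ↥J)
      - ∑ i, cr i • ⟨φ (wv (eb i)), Ideal.mem_map_of_mem φ (hwvI (eb i))⟩) = 0 := by
    rw [map_sub, map_sum]
    have h5 : ∀ i, q (cr i • (⟨φ (wv (eb i)), Ideal.mem_map_of_mem φ (hwvI (eb i))⟩ : ↥J)) =
        c i • q ⟨φ (wv (eb i)), Ideal.mem_map_of_mem φ (hwvI (eb i))⟩ := by
      intro i
      rw [map_smul, ← hcr i, compatU]
    rw [Finset.sum_congr rfl (fun i _ => h5 i), hc, sub_self]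
  have hker : ((⟨b, hb⟩ : ↥J)
      - ∑ i, cr i • ⟨φ (wv (eb i)), Ideal.mem_map_of_mem φ (hwvI (eb i))⟩)
      ∈ (maximalIdeal B • ⊤ : Submodule B ↥J) := by
    rwa [← Submodule.Quotient.mk_eq_zero]
  have hval : (b - ∑ i, cr i • φ (wv (eb i))) ∈ maximalIdeal B • (J : Submodule B B) := by
    have h2 : Submodule.map J.subtype (maximalIdeal B • ⊤ : Submodule B ↥J)
        = maximalIdeal B • (J : Submodule B B) := by
      rw [Submodule.map_smul'', Submodule.map_top, Submodule.range_subtype]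
    rw [← h2]
    refine ⟨_, hker, ?_⟩
    simp
  have hsum : (∑ i, cr i • φ (wv (eb i))) ∈ N := by
    apply Submodule.sum_mem
    intro i _
    exact Submodule.smul_mem _ _ (Ideal.subset_span (Set.mem_range_self i))
  have hbeq : b = (∑ i, cr i • φ (wv (eb i))) + (b - ∑ i, cr i • φ (wv (eb i))) := by ring
  rw [hbeq]
  exact Submodule.add_mem_sup hsum hval

end BSide

theorem edim_le_finrank_cotangent (A : Type) [CommRing A] [IsLocalRing A] [IsNoetherianRing A] :
    edim A ≤ Module.finrank (A ⧸ maximalIdeal A) (maximalIdeal A).Cotangent := by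
  classical
  letI : Field (A ⧸ maximalIdeal A) := Ideal.Quotient.field _
  haveI : Module.Finite (A ⧸ maximalIdeal A) (maximalIdeal A).Cotangent :=
    inferInstanceAs (Module.Finite (ResidueField A) (CotangentSpace A))
  set Bas := Module.finBasis (A ⧸ maximalIdeal A) (maximalIdeal A).Cotangent with hBas
  have hsurj := Ideal.toCotangent_surjective (maximalIdeal A)
  choose t ht using fun i => hsurj (Bas i)
  have hspanV : Submodule.span (ResidueField A)
      (⇑(maximalIdeal A).toCotangent '' Set.range t) = ⊤ := by
    have h1 : ⇑(maximalIdeal A).toCotangent '' Set.range t = Set.range ⇑Bas := by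
      rw [← Set.range_comp]
      exact congrArg Set.range (funext fun i => ht i)
    rw [h1]
    exact Bas.span_eq
  have hspan : Submodule.span A (Set.range t) = ⊤ :=
    IsLocalRing.CotangentSpace.span_image_eq_top_iff.mp hspanV
  apply Nat.sInf_le
  refine ⟨fun i => (t i : A), ?_⟩
  have h2 : (Set.range fun i => ((t i : A))) = (⇑(Submodule.subtype (maximalIdeal A))) '' Set.range t := by
    rw [← Set.range_comp]; rfl
  rw [h2]
  show Submodule.span A _ = _
  rw [← Submodule.map_span, hspan, Submodule.map_top, Submodule.range_subtype]



universe v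

namespace MyRes

variable {C : Type*} [Category.{v} C] [Abelian C] [EnoughProjectives C]

def ofComplexSucc {X₀ X₁ : C} (f : X₁ ⟶ X₀) : Σ' (X₂ : C) (d : X₂ ⟶ X₁), d ≫ f = 0 :=
  ⟨syzygies f, Projective.d f, by
    have h1 : (π (kernel f) ≫ kernel.ι f) ≫ f = 0 := by rw [Category.assoc, kernel.condition, comp_zero]
    exact @id (Projective.d f ≫ f = 0) h1⟩

def ofComplex' (X₀ X₁ : C) (d : X₁ ⟶ X₀) : ChainComplex C ℕ :=
  ChainComplex.mk' X₀ X₁ d (fun f => ofComplexSucc f)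

lemma ofComplex'_d_1_0 (X₀ X₁ : C) (d : X₁ ⟶ X₀) :
    (ofComplex' X₀ X₁ d).d 1 0 = d := by
  simp [ofComplex']

lemma ofComplex'_exactAt_succ (X₀ X₁ : C) (d : X₁ ⟶ X₀) (n : ℕ) :
    (ofComplex' X₀ X₁ d).ExactAt (n + 1) := by
  rw [HomologicalComplex.exactAt_iff' _ (n + 1 + 1) (n + 1) n (by simp) (by simp)]
  refine (ShortComplex.exact_iff_of_iso ?_).2 (exact_d_f ((ofComplex' X₀ X₁ d).d (n + 1) n))
  exact ShortComplex.isoMk (ChainComplex.mk'XIso X₀ X₁ d (fun f => ofComplexSucc f) n)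
    (Iso.refl _) (Iso.refl _)
    ((ChainComplex.mk'_d X₀ X₁ d (fun f => ofComplexSucc f) n).symm.trans (Category.comp_id _).symm)
    ((Category.id_comp _).trans (Category.comp_id _).symm)

instance (X₀ X₁ : C) [Projective X₀] [Projective X₁] (d : X₁ ⟶ X₀) (n : ℕ) :
    Projective ((ofComplex' X₀ X₁ d).X n) := by
  obtain (_ | _ | _ | n) := n
  · exact (inferInstance : Projective X₀)
  · exact (inferInstance : Projective X₁)
  · apply Projective.projective_over
  · apply Projective.projective_over

def res (Z X₀ X₁ : C) [Projective X₀] [Projective X₁] (d : X₁ ⟶ X₀) (p : X₀ ⟶ Z)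
    (hdp : d ≫ p = 0) [Epi p] (hex : (ShortComplex.mk d p hdp).Exact) :
    ProjectiveResolution Z where
  complex := ofComplex' X₀ X₁ d
  π := (ChainComplex.toSingle₀Equiv _ _).symm ⟨p, by
        rw [ofComplex'_d_1_0]; exact hdp⟩
  quasiIso := ⟨fun n => by
    cases n with
    | zero =>
      rw [ChainComplex.quasiIsoAt₀_iff, ShortComplex.quasiIso_iff_of_zeros']
      · refine (ShortComplex.exact_and_epi_g_iff_of_iso ?_).2 ⟨hex, inferInstance⟩
        exact ShortComplex.isoMk (Iso.refl _) (Iso.refl _) (Iso.refl _)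
          (by simp [ofComplex']; exact (Category.id_comp _).trans (Category.comp_id _).symm)
          (by
            simp [ChainComplex.toSingle₀Equiv]
            erw [HomologicalComplex.mkHomToSingle_f]
            simp
            exact (Category.id_comp p).trans ((Category.comp_id p).symm.trans (Category.comp_id _).symm))
      all_goals rfl
    | succ n =>
      rw [quasiIsoAt_iff_exactAt']
      · apply ofComplex'_exactAt_succ
      · apply ChainComplex.exactAt_succ_single_obj⟩

end MyRes


section Bridge

variable (A M Y : Type) [CommRing A] [IsLocalRing A] [IsNoetherianRing A]
  [AddCommGroup M] [Module A M] [Module.Finite A M]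
  [AddCommGroup Y] [Module A Y]

theorem torOne_bridge (n : ℕ) (x : Fin n → A)
    (hx : Ideal.span (Set.range x) = maximalIdeal A)
    (Θ : (M ⊗[A] (Fin n → A)) →ₗ[A] Y)
    (hkill : ∀ (Z : Type) (_ : AddCommGroup Z), ∀ (_ : Module A Z),
      ∀ (h : Z →ₗ[A] (Fin n → A)), (Fintype.linearCombination A x) ∘ₗ h = 0 →
      Θ ∘ₗ (LinearMap.lTensor M h) = 0) :
    Module.Finite A (torOne A M) ∧
    ∃ ρ : (torOne A M : Type) →ₗ[A] Y, LinearMap.range ρ =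
      Submodule.map Θ (LinearMap.ker (LinearMap.lTensor M (Fintype.linearCombination A x))) := by
  classical
  set I := maximalIdeal A
  set dlin : (Fin n → A) →ₗ[A] A := Fintype.linearCombination A x with hdlin
  have hrange : LinearMap.range dlin = I := by
    rw [hdlin, Fintype.range_linearCombination]
    exact hx
  set M' : ModuleCat A := ModuleCat.of A M
  set kM : ModuleCat A := ModuleCat.of A (A ⧸ I)
  set X0 : ModuleCat A := ModuleCat.of A A
  set X1 : ModuleCat A := ModuleCat.of A (Fin n → A)
  set d : X1 ⟶ X0 := ModuleCat.ofHom dlin with hd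
  set p : X0 ⟶ kM := ModuleCat.ofHom (Submodule.mkQ I) with hp
  have hdp : d ≫ p = 0 := by
    apply ModuleCat.hom_ext; apply LinearMap.ext
    intro c
    show Submodule.mkQ I (dlin c) = 0
    rw [Submodule.mkQ_apply, Submodule.Quotient.mk_eq_zero]
    exact hrange ▸ LinearMap.mem_range_self dlin c
  haveI : Epi p := (ModuleCat.epi_iff_surjective p).2 (Submodule.mkQ_surjective I)
  haveI : Projective X0 := ModuleCat.projective_of_free (Module.Basis.singleton (Fin 1) A)
  haveI : Projective X1 := ModuleCat.projective_of_free (Pi.basisFun A (Fin n))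
  have hex : (ShortComplex.mk d p hdp).Exact := by
    rw [ShortComplex.moduleCat_exact_iff]
    intro a ha
    have : a ∈ I := by
      rw [← Submodule.Quotient.mk_eq_zero I]
      exact ha
    rw [← hrange] at this
    exact this
  set P : ProjectiveResolution kM := MyRes.res kM X0 X1 d p hdp hex with hP
  set F := (MonoidalCategory.tensoringLeft (ModuleCat A)).obj M' with hF
  set T := (F.mapHomologicalComplex (ComplexShape.down ℕ)).obj P.complex with hT
  -- the iso from torOne to the homology of the short complex
  have e1 : torOne A M ≅ (HomologicalComplex.homologyFunctor _ _ 1).obj T :=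
    P.isoLeftDerivedObj F 1
  set S := T.sc' 2 1 0 with hS
  have e2 : (HomologicalComplex.homologyFunctor (ModuleCat A) _ 1).obj T ≅ S.homology :=
    ShortComplex.homologyMapIso (T.isoSc' 2 1 0 (by simp) (by simp))
  have e3 : S.homology ≅ S.moduleCatLeftHomologyData.H := S.moduleCatHomologyIso
  have e : (torOne A M : Type) ≃ₗ[A] S.moduleCatLeftHomologyData.H :=
    (e1 ≪≫ e2 ≪≫ e3).toLinearEquiv
  -- identify S.g with lTensor M dlin
  have hd10 : P.complex.d 1 0 = d := MyRes.ofComplex'_d_1_0 X0 X1 d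
  have hSg : S.g = F.map (P.complex.d 1 0) := rfl
  have hgfun : ⇑S.g.hom = ⇑(LinearMap.lTensor M dlin) := by rw [hSg, hd10]; rfl
  have hker : LinearMap.ker S.g.hom =
      LinearMap.ker (LinearMap.lTensor M dlin) := by
    ext z
    show S.g.hom z = 0 ↔ _
    rw [congrFun hgfun z]
    rfl
  -- Θ kills the boundaries
  have hSf0 : Θ ∘ₗ S.f.hom = 0 := by
    have hcomp : dlin ∘ₗ (P.complex.d 2 1).hom = 0 := by
      have h0 := P.complex.d_comp_d 2 1 0
      rw [hd10] at h0
      exact congrArg ModuleCat.Hom.hom h0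
    exact hkill _ _ _ (P.complex.d 2 1).hom hcomp
  set K' := LinearMap.ker S.g.hom with hK'
  have hkr : LinearMap.range S.moduleCatToCycles ≤
      LinearMap.ker (Θ ∘ₗ K'.subtype) := by
    rintro - ⟨z, rfl⟩
    show Θ (K'.subtype (S.moduleCatToCycles z)) = 0
    show Θ (S.f z) = 0
    exact DFunLike.congr_fun hSf0 z
  set ρ0 : S.moduleCatLeftHomologyData.H →ₗ[A] Y :=
    Submodule.liftQ _ (Θ ∘ₗ K'.subtype) hkr with hρ0
  have hrangeρ : LinearMap.range (ρ0 ∘ₗ (e.toLinearMap)) =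
      Submodule.map Θ (LinearMap.ker (LinearMap.lTensor M dlin)) := by
    rw [LinearMap.range_comp, LinearEquiv.range, Submodule.map_top, hρ0]
    refine (Submodule.range_liftQ _ _ _).trans ?_
    exact (LinearMap.range_comp _ _).trans
      ((congrArg (Submodule.map Θ) (Submodule.range_subtype K')).trans (congrArg (Submodule.map Θ) hker))
  haveI : Module.Finite A (M ⊗[A] (Fin n → A)) :=
    Module.Finite.tensorProduct A M (Fin n → A)
  haveI hnoeth : IsNoetherian A (M ⊗[A] (Fin n → A)) :=
    isNoetherian_of_isNoetherianRing_of_finite A _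
  haveI hnoeth2 : IsNoetherian A ↑S.X₂ := hnoeth
  haveI : Module.Finite A ↥K' := by
    rw [Module.Finite.iff_fg]
    exact IsNoetherian.noetherian _
  haveI : Module.Finite A S.moduleCatLeftHomologyData.H :=
    Module.Finite.of_surjective
      (Submodule.mkQ (LinearMap.range S.moduleCatToCycles))
      (Submodule.mkQ_surjective _)
  refine ⟨Module.Finite.equiv e.symm, ρ0 ∘ₗ e.toLinearMap, hrangeρ⟩

end Bridge




set_option maxHeartbeats 2000000 in
set_option synthInstance.maxHeartbeats 200000 in
/-- For a local morphism `A → B` and a nonzero `B`-module `M` finite over `A`: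
`dim_k Tor₁^A(M,k) ≥ (edim A − μ_B(𝔪_A B)) · dim_k Tor₀^A(M,k)`. -/
theorem tor_one_lower_bound
    {A B M : Type} [CommRing A] [IsLocalRing A] [IsNoetherianRing A]
    [CommRing B] [IsLocalRing B] [IsNoetherianRing B]
    [Algebra A B] [IsLocalHom (algebraMap A B)]
    [AddCommGroup M] [Module B M] [Module A M] [IsScalarTower A B M]
    [Module.Finite A M] [Nontrivial M]
    (htor : Module.IsTorsionBySet A (torOne A M) ((maximalIdeal A : Ideal A) : Set A)) :
    ((edim A : ℤ) - (mu B (Ideal.map (algebraMap A B) (maximalIdeal A)) : ℤ)) *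
      (Module.finrank (A ⧸ maximalIdeal A)
        (TensorProduct A (A ⧸ maximalIdeal A) M) : ℤ) ≤
    ((letI := Module.IsTorsionBySet.module htor
      Module.finrank (A ⧸ maximalIdeal A) (torOne A M)) : ℤ) := by
  classical
  letI mT := Module.IsTorsionBySet.module htor
  letI : Field (A ⧸ maximalIdeal A) := Ideal.Quotient.field _
  -- generators of the maximal ideal of A
  have hIfg : (maximalIdeal A).FG := IsNoetherian.noetherian _
  have hnex : (edim A) ∈ {kk : ℕ | ∃ y : Fin kk → A, Ideal.span (Set.range y) = maximalIdeal A} := by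
    apply Nat.sInf_mem
    obtain ⟨nn, xx, hxx⟩ := Submodule.fg_iff_exists_fin_generating_family.mp hIfg
    exact ⟨nn, xx, hxx⟩
  obtain ⟨x, hx⟩ := hnex
  -- choice of w on the B side
  obtain ⟨s, w, hsmu, hwI, hJle⟩ := exists_w (A := A) (B := B)
  -- cotangent space setup
  have hVfin : FiniteDimensional (A ⧸ maximalIdeal A) (maximalIdeal A).Cotangent :=
    inferInstanceAs (FiniteDimensional (ResidueField A) (CotangentSpace A))
  set W : Submodule (A ⧸ maximalIdeal A) (maximalIdeal A).Cotangent :=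
    Submodule.span _ (Set.range fun j => (maximalIdeal A).toCotangent ⟨w j, hwI j⟩) with hW
  set dW := Module.finrank (A ⧸ maximalIdeal A) ((maximalIdeal A).Cotangent ⧸ W) with hdW
  set Bas := Module.finBasis (A ⧸ maximalIdeal A) ((maximalIdeal A).Cotangent ⧸ W) with hBas
  -- lifts of basis vectors
  have hsurj2 : Function.Surjective
      (fun z : ↥(maximalIdeal A) => W.mkQ ((maximalIdeal A).toCotangent z)) :=
    (Submodule.mkQ_surjective W).comp (Ideal.toCotangent_surjective (maximalIdeal A))
  choose vv hvv using fun i => hsurj2 (Bas i)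
  -- the coordinate map γ : (Fin n → A) →ₗ[A] (Fin dW → k)
  set dlin : (Fin (edim A) → A) →ₗ[A] A := Fintype.linearCombination A x with hdlin
  have hrange : LinearMap.range dlin = (maximalIdeal A : Submodule A A) := by
    rw [hdlin, Fintype.range_linearCombination]; exact hx
  have hdmem : ∀ cc, dlin cc ∈ (maximalIdeal A : Submodule A A) := by
    intro cc; rw [← hrange]; exact LinearMap.mem_range_self _ cc
  set dres : (Fin (edim A) → A) →ₗ[A] ↥(maximalIdeal A) :=
    LinearMap.codRestrict (maximalIdeal A : Submodule A A) dlin hdmem with hdres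
  set c : (maximalIdeal A).Cotangent →ₗ[A ⧸ maximalIdeal A] (Fin dW → (A ⧸ maximalIdeal A)) :=
    (Bas.equivFun.toLinearMap) ∘ₗ W.mkQ with hc
  set γ : (Fin (edim A) → A) →ₗ[A] (Fin dW → (A ⧸ maximalIdeal A)) :=
    (c.restrictScalars A) ∘ₗ ((maximalIdeal A).toCotangent ∘ₗ dres) with hγ
  -- the target module and map Θ
  set Θ : (TensorProduct A M (Fin (edim A) → A)) →ₗ[A]
      (Fin dW → TensorProduct A (A ⧸ maximalIdeal A) M) :=
    (LinearMap.compLeft (TensorProduct.comm A M (A ⧸ maximalIdeal A)).toLinearMap (Fin dW)) ∘ₗ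
      ((TensorProduct.piRight A A M (fun _ : Fin dW => (A ⧸ maximalIdeal A))).toLinearMap ∘ₗ
        (LinearMap.lTensor M γ)) with hΘ
  -- Θ kills boundaries
  have hkill : ∀ (Z : Type) (_ : AddCommGroup Z), ∀ (_ : Module A Z),
      ∀ (h : Z →ₗ[A] (Fin (edim A) → A)), dlin ∘ₗ h = 0 →
      Θ ∘ₗ (LinearMap.lTensor M h) = 0 := by
    intro Z _ _ h hcomp
    have h1 : γ ∘ₗ h = 0 := by
      apply LinearMap.ext; intro z
      have h2 : dres (h z) = 0 := Subtype.ext (DFunLike.congr_fun hcomp z)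
      show (c.restrictScalars A) ((maximalIdeal A).toCotangent (dres (h z))) = 0
      rw [h2, map_zero, map_zero]
    have h3 : (LinearMap.lTensor M γ) ∘ₗ (LinearMap.lTensor M h) = 0 := by
      rw [← LinearMap.lTensor_comp, h1, LinearMap.lTensor_zero]
    apply LinearMap.ext; intro z
    have h4 : (LinearMap.lTensor M γ) ((LinearMap.lTensor M h) z) = 0 :=
      DFunLike.congr_fun h3 z
    simp only [hΘ, LinearMap.comp_apply, h4, map_zero, LinearMap.zero_apply]
  -- apply the bridge
  obtain ⟨hfinT, ρ, hρrange⟩ := torOne_bridge A M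
    (Fin dW → TensorProduct A (A ⧸ maximalIdeal A) M) (edim A) x hx Θ hkill
  -- compute Θ on pure tensors
  have hΘtmul : ∀ (u : M) (p : Fin (edim A) → A),
      Θ (u ⊗ₜ[A] p) = fun i => (γ p i) ⊗ₜ[A] u := by
    intro u p
    rw [hΘ]
    simp only [LinearMap.comp_apply, LinearMap.lTensor_tmul, LinearEquiv.coe_toLinearMap]
    funext i
    simp [LinearMap.compLeft_apply, TensorProduct.piRight_apply, TensorProduct.comm_tmul]

  -- values of γ on chosen lifts
  have hγv : ∀ (i : Fin dW) (pp : Fin (edim A) → A), dlin pp = (vv i : A) →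
      γ pp = fun i' => if i = i' then 1 else 0 := by
    intro i pp hpp
    funext i'
    show (c ((maximalIdeal A).toCotangent (dres pp))) i' = _
    have h5 : dres pp = vv i := Subtype.ext hpp
    rw [h5]
    have h7 : W.mkQ ((maximalIdeal A).toCotangent (vv i)) = Bas i := hvv i
    show Bas.equivFun (W.mkQ ((maximalIdeal A).toCotangent (vv i))) i' = _
    rw [h7]
    exact Bas.equivFun_self i i'
  have hγw : ∀ (j : Fin s) (pp : Fin (edim A) → A), dlin pp = w j → γ pp = 0 := by
    intro j pp hpp
    funext i'
    show (c ((maximalIdeal A).toCotangent (dres pp))) i' = 0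
    have h5 : dres pp = ⟨w j, hwI j⟩ := Subtype.ext hpp
    rw [h5]
    show Bas.equivFun (W.mkQ ((maximalIdeal A).toCotangent ⟨w j, hwI j⟩)) i' = 0
    have h6 : W.mkQ ((maximalIdeal A).toCotangent ⟨w j, hwI j⟩) = 0 := by
      rw [Submodule.mkQ_apply, Submodule.Quotient.mk_eq_zero]
      exact Submodule.subset_span ⟨j, rfl⟩
    rw [h6]
    simp
  -- preimages under dlin
  have hpre : ∀ a : A, a ∈ maximalIdeal A → ∃ pp, dlin pp = a := by
    intro a ha
    rw [← hrange] at ha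
    exact ha
  choose pv hpv using fun i => hpre (vv i) (vv i).2
  choose pw hpw using fun j => hpre (w j) (hwI j)
  -- the generators are hit
  have hgen : ∀ (i : Fin dW) (u : M),
      Pi.single i ((1 : A ⧸ maximalIdeal A) ⊗ₜ[A] u) ∈
        Submodule.map Θ (LinearMap.ker (LinearMap.lTensor M dlin)) := by
    intro i u
    have hvmem : algebraMap A B (vv i : A) ∈ Ideal.map (algebraMap A B) (maximalIdeal A) :=
      Ideal.mem_map_of_mem _ (vv i).2
    have hvspan : algebraMap A B (vv i : A) ∈
        Submodule.span B (Set.range fun j => algebraMap A B (w j)) := hJle hvmem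
    rw [Submodule.mem_span_range_iff_exists_fun] at hvspan
    obtain ⟨b, hb⟩ := hvspan
    set ζ : TensorProduct A M (Fin (edim A) → A) :=
      u ⊗ₜ[A] pv i - ∑ j, (b j • u) ⊗ₜ[A] pw j with hζ
    have hζker : (LinearMap.lTensor M dlin) ζ = 0 := by
      rw [hζ, map_sub, map_sum]
      simp only [LinearMap.lTensor_tmul, hpv, hpw]
      rw [← LinearEquiv.map_eq_zero_iff (TensorProduct.rid A M)]
      rw [map_sub, map_sum]
      simp only [TensorProduct.rid_tmul]
      have h8 : ((vv i : A)) • u = (∑ j, b j * algebraMap A B (w j)) • u := by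
        rw [← algebraMap_smul B ((vv i : A)) u, ← hb]
        rfl
      have h9 : ∀ j, (w j) • (b j • u) = (b j * algebraMap A B (w j)) • u := by
        intro j
        rw [← algebraMap_smul B (w j), smul_smul, mul_comm]
      rw [h8]
      simp only [h9]
      rw [← Finset.sum_smul, sub_self]
    refine ⟨ζ, hζker, ?_⟩
    rw [hζ, map_sub, map_sum]
    have h10 : Θ (u ⊗ₜ[A] pv i) = Pi.single i ((1 : A ⧸ maximalIdeal A) ⊗ₜ[A] u) := by
      rw [hΘtmul, hγv i (pv i) (hpv i)]
      funext i'
      by_cases hii : i = i'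
      · subst hii
        simp [Pi.single_apply]
      · simp [Pi.single_apply, Ne.symm hii, hii, TensorProduct.zero_tmul]
    have h11 : ∀ j, Θ ((b j • u) ⊗ₜ[A] pw j) = 0 := by
      intro j
      rw [hΘtmul, hγw j (pw j) (hpw j)]
      funext i'
      simp
    rw [h10]
    simp only [h11, Finset.sum_const_zero, sub_zero]
  -- surjectivity of Θ on cycles
  have hsurjΘ : Submodule.map Θ (LinearMap.ker (LinearMap.lTensor M dlin)) = ⊤ := by
    rw [eq_top_iff]
    rintro y -
    have hy : y = ∑ i, Pi.single i (y i) := (Finset.univ_sum_single y).symm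
    rw [hy]
    refine Submodule.sum_mem _ fun i _ => ?_
    have hz : ∀ z : TensorProduct A (A ⧸ maximalIdeal A) M,
        Pi.single i z ∈ Submodule.map Θ (LinearMap.ker (LinearMap.lTensor M dlin)) := by
      intro z
      induction z using TensorProduct.induction_on with
      | zero =>
        rw [Pi.single_zero]
        exact Submodule.zero_mem _
      | tmul cc u =>
        obtain ⟨a, rfl⟩ := Ideal.Quotient.mk_surjective cc
        have h12 : (Ideal.Quotient.mk (maximalIdeal A) a) ⊗ₜ[A] u =
            a • ((1 : A ⧸ maximalIdeal A) ⊗ₜ[A] u) := by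
          rw [TensorProduct.smul_tmul']
          congr 1
          rw [← Ideal.Quotient.algebraMap_eq, Algebra.algebraMap_eq_smul_one]
        rw [h12, Pi.single_smul]
        exact Submodule.smul_mem _ _ (hgen i u)
      | add z₁ z₂ h₁ h₂ =>
        rw [Pi.single_add]
        exact Submodule.add_mem _ h₁ h₂
    exact hz (y i)
  have hρsurj : Function.Surjective ρ :=
    LinearMap.range_eq_top.mp (by rw [hρrange, hsurjΘ])
  -- pass to residue field linear maps
  have compatT : ∀ (a : A) (z : ↑(torOne A M)),
      Ideal.Quotient.mk (maximalIdeal A) a • z = a • z := htor.mk_smul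
  have compatY : ∀ (a : A) (z : Fin dW → TensorProduct A (A ⧸ maximalIdeal A) M),
      Ideal.Quotient.mk (maximalIdeal A) a • z = a • z := by
    intro a z
    funext i
    show (Ideal.Quotient.mk (maximalIdeal A) a) • (z i) = a • z i
    rw [← Ideal.Quotient.algebraMap_eq, algebraMap_smul]
  haveI := hfinT
  have hsurjk : Function.Surjective ⇑(compat_linearMap compatT compatY ρ) := by
    intro y
    obtain ⟨z, hz⟩ := hρsurj y
    exact ⟨z, hz⟩
  haveI : Module.Finite (A ⧸ maximalIdeal A) (torOne A M) := compat_finite compatT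
  have hfr1 : Module.finrank (A ⧸ maximalIdeal A)
      (Fin dW → TensorProduct A (A ⧸ maximalIdeal A) M)
      ≤ Module.finrank (A ⧸ maximalIdeal A) (torOne A M) := by
    have h13 := LinearMap.finrank_range_le (compat_linearMap compatT compatY ρ)
    rwa [LinearMap.range_eq_top.mpr hsurjk, finrank_top] at h13
  haveI : Module.Finite A (TensorProduct A (A ⧸ maximalIdeal A) M) :=
    Module.Finite.tensorProduct _ _ _
  have compatM : ∀ (a : A) (z : TensorProduct A (A ⧸ maximalIdeal A) M),
      Ideal.Quotient.mk (maximalIdeal A) a • z = a • z := fun a z => by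
    rw [← Ideal.Quotient.algebraMap_eq, algebraMap_smul]
  haveI : Module.Finite (A ⧸ maximalIdeal A) (TensorProduct A (A ⧸ maximalIdeal A) M) :=
    compat_finite compatM
  have hfr2 : Module.finrank (A ⧸ maximalIdeal A)
      (Fin dW → TensorProduct A (A ⧸ maximalIdeal A) M)
      = dW * Module.finrank (A ⧸ maximalIdeal A) (TensorProduct A (A ⧸ maximalIdeal A) M) := by
    rw [Module.finrank_pi_fintype]
    simp [Finset.sum_const, mul_comm]
  have hfr3 : dW + Module.finrank (A ⧸ maximalIdeal A) ↥W
      = Module.finrank (A ⧸ maximalIdeal A) (maximalIdeal A).Cotangent :=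
    Submodule.finrank_quotient_add_finrank W
  have hfr4 : Module.finrank (A ⧸ maximalIdeal A) ↥W ≤ s := by
    have h14 := finrank_span_le_card (R := A ⧸ maximalIdeal A)
      (Set.range fun j => (maximalIdeal A).toCotangent ⟨w j, hwI j⟩)
    rw [← hW] at h14
    refine h14.trans ?_
    rw [Set.toFinset_card]
    simpa using Fintype.card_range_le (fun j => (maximalIdeal A).toCotangent ⟨w j, hwI j⟩)
  have hfr5 : edim A ≤ Module.finrank (A ⧸ maximalIdeal A) (maximalIdeal A).Cotangent :=
    edim_le_finrank_cotangent A
  -- final arithmetic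
  have hN : edim A ≤ dW + mu B (Ideal.map (algebraMap A B) (maximalIdeal A)) := by omega
  have hT1 : dW * Module.finrank (A ⧸ maximalIdeal A) (TensorProduct A (A ⧸ maximalIdeal A) M)
      ≤ Module.finrank (A ⧸ maximalIdeal A) (torOne A M) := hfr2 ▸ hfr1
  show ((edim A : ℤ) - (mu B (Ideal.map (algebraMap A B) (maximalIdeal A)) : ℤ)) *
      (Module.finrank (A ⧸ maximalIdeal A) (TensorProduct A (A ⧸ maximalIdeal A) M) : ℤ)
      ≤ ((Module.finrank (A ⧸ maximalIdeal A) (torOne A M) : ℕ) : ℤ)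
  have hc1 : ((dW : ℤ) * (Module.finrank (A ⧸ maximalIdeal A)
      (TensorProduct A (A ⧸ maximalIdeal A) M) : ℤ))
      ≤ ((Module.finrank (A ⧸ maximalIdeal A) (torOne A M) : ℕ) : ℤ) := by
    exact_mod_cast hT1
  have hc2 : (edim A : ℤ) ≤ (dW : ℤ)
      + (mu B (Ideal.map (algebraMap A B) (maximalIdeal A)) : ℤ) := by exact_mod_cast hN
  have hc3 : (0 : ℤ) ≤ (Module.finrank (A ⧸ maximalIdeal A)
      (TensorProduct A (A ⧸ maximalIdeal A) M) : ℤ) := by positivity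
  nlinarith [hc1, hc2, hc3]

end
end
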